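/- arXiv:1911.04223 — 7 statements merged into one kernel-verified Lean document; each statement's English description precedes it below -/
import Mathlib

section
/- Let ψ(x) = exp(κ(x−μ)²/(2σ²)) · D_{−ρ/κ}(−((x−μ)/σ)√(2κ)) where D_α(x) = (e^{−x²/4}/Γ(−α)) ∫₀^∞ t^{−α−1} e^{−t²/2 − xt} dt for α < 0. Then ψ is strictly positive, strictly increasing, strictly convex, and satisfies (σ²/2)ψ''(x) + κ(μ−x)ψ'(x) − ρψ(x) = 0 for all x ∈ ℝ. -/
/-!
Substituting `y = √(2κ) (x - μ) / σ`, the Gaussian prefactor of `ψ` cancels the one in `D_α`,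
so `ψ(x) = J_{β-1}(y) / Γ(β)` with `β = ρ/κ` and `J_p(a) = ∫₀^∞ t^p e^{-t²/2 + a t} dt`.
Differentiating under the integral sign gives `J_p' = J_{p+1}`, so every derivative of `ψ` is a
positive multiple of some `J_p > 0`, whence positivity, monotonicity and convexity. Integrating
`(t^β e^{-t²/2 + a t})'` over `(0, ∞)` gives the recurrence `J_{β+1} = a J_β + β J_{β-1}`,
which is the differential equation after the change of variables.
-/

open Set

/-- Parabolic cylinder function `D_α(x)` for `α < 0` (integral representation). -/
noncomputable def Dcyl (α x : ℝ) : ℝ :=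
  Real.exp (-x ^ 2 / 4) / Real.Gamma (-α) *
    ∫ t in Ioi (0 : ℝ), t ^ (-α - 1) * Real.exp (-t ^ 2 / 2 - x * t)

/-- Increasing fundamental solution of `(σ²/2)u'' + κ(μ−x)u' − ρu = 0`. -/
noncomputable def psi (κ μ σ ρ : ℝ) (x : ℝ) : ℝ :=
  Real.exp (κ * (x - μ) ^ 2 / (2 * σ ^ 2)) *
    Dcyl (-(ρ / κ)) (-((x - μ) / σ) * Real.sqrt (2 * κ))

/-- Decreasing fundamental solution of `(σ²/2)u'' + κ(μ−x)u' − ρu = 0`. -/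
noncomputable def phi (κ μ σ ρ : ℝ) (x : ℝ) : ℝ :=
  Real.exp (κ * (x - μ) ^ 2 / (2 * σ ^ 2)) *
    Dcyl (-(ρ / κ)) (((x - μ) / σ) * Real.sqrt (2 * κ))

open MeasureTheory Filter Topology Real

noncomputable def tiltedGaussMoment (p a : ℝ) : ℝ :=
  ∫ t in Ioi (0 : ℝ), t ^ p * exp (-t ^ 2 / 2 + a * t)

lemma exp_neg_sq_div_two_add_mul_le {a A : ℝ} (hA : |a| ≤ A) (t : ℝ) :
    exp (-t ^ 2 / 2 + a * t) ≤ exp (A ^ 2) * exp (-(1 / 4) * t ^ 2) := by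
  rw [← exp_add, exp_le_exp]
  have hat : a * t ≤ A * |t| :=
    (le_abs_self _).trans (by rw [abs_mul]; gcongr)
  nlinarith [sq_nonneg (A - |t| / 2), sq_abs t]

lemma norm_rpow_mul_exp_neg_sq_div_two_add_mul_le {a A t : ℝ} (p : ℝ) (hA : |a| ≤ A)
    (ht : 0 ≤ t) :
    ‖t ^ p * exp (-t ^ 2 / 2 + a * t)‖
      ≤ exp (A ^ 2) * (t ^ p * exp (-(1 / 4) * t ^ 2)) := by
  rw [norm_of_nonneg (by positivity), mul_left_comm]
  exact mul_le_mul_of_nonneg_left (exp_neg_sq_div_two_add_mul_le hA t) (rpow_nonneg ht p)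

lemma aestronglyMeasurable_tiltedGaussMoment_integrand (p a : ℝ) :
    AEStronglyMeasurable (fun t : ℝ => t ^ p * exp (-t ^ 2 / 2 + a * t))
      (volume.restrict (Ioi 0)) :=
  (by fun_prop : Measurable _).aestronglyMeasurable

lemma integrableOn_tiltedGaussMoment_integrand {p : ℝ} (hp : -1 < p) (a : ℝ) :
    IntegrableOn (fun t : ℝ => t ^ p * exp (-t ^ 2 / 2 + a * t)) (Ioi 0) := by
  refine (((integrableOn_rpow_mul_exp_neg_mul_sq (by norm_num : (0 : ℝ) < 1 / 4) hp).const_mul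
    (exp (|a| ^ 2))).mono' (aestronglyMeasurable_tiltedGaussMoment_integrand p a) ?_)
  filter_upwards [ae_restrict_mem measurableSet_Ioi] with t ht
  exact norm_rpow_mul_exp_neg_sq_div_two_add_mul_le p le_rfl ht.le

lemma tiltedGaussMoment_pos {p : ℝ} (hp : -1 < p) (a : ℝ) : 0 < tiltedGaussMoment p a := by
  have hpos : ∀ t ∈ Ioi (0 : ℝ), 0 < t ^ p * exp (-t ^ 2 / 2 + a * t) :=
    fun t ht => mul_pos (rpow_pos_of_pos ht p) (exp_pos _)
  rw [tiltedGaussMoment, setIntegral_pos_iff_support_of_nonneg_ae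
    ((ae_restrict_mem measurableSet_Ioi).mono fun t ht => (hpos t ht).le)
    (integrableOn_tiltedGaussMoment_integrand hp a)]
  calc (0 : ENNReal) < volume (Ioi (0 : ℝ)) := by simp [volume_Ioi]
    _ ≤ _ := measure_mono (show Ioi 0 ⊆ Function.support _ ∩ Ioi 0 from
      fun t ht => ⟨(hpos t ht).ne', ht⟩)

lemma hasDerivAt_tiltedGaussMoment {p : ℝ} (hp : -1 < p) (a : ℝ) :
    HasDerivAt (tiltedGaussMoment p) (tiltedGaussMoment (p + 1) a) a := by
  refine (hasDerivAt_integral_of_dominated_loc_of_deriv_le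
    (F := fun x t => t ^ p * exp (-t ^ 2 / 2 + x * t))
    (F' := fun x t => t ^ (p + 1) * exp (-t ^ 2 / 2 + x * t))
    (bound := fun t => exp ((|a| + 1) ^ 2) * (t ^ (p + 1) * exp (-(1 / 4) * t ^ 2)))
    (Metric.ball_mem_nhds a one_pos)
    (Eventually.of_forall fun x => aestronglyMeasurable_tiltedGaussMoment_integrand p x)
    (integrableOn_tiltedGaussMoment_integrand hp a)
    (aestronglyMeasurable_tiltedGaussMoment_integrand (p + 1) a) ?_
    ((integrableOn_rpow_mul_exp_neg_mul_sq (by norm_num : (0 : ℝ) < 1 / 4)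
      (by linarith)).const_mul _) ?_).2
  · filter_upwards [ae_restrict_mem measurableSet_Ioi] with t ht x hx
    have hxa : |x| ≤ |a| + 1 := by
      have := abs_sub_abs_le_abs_sub x a
      rw [Metric.mem_ball, dist_eq] at hx
      linarith
    exact norm_rpow_mul_exp_neg_sq_div_two_add_mul_le (p + 1) hxa ht.le
  · filter_upwards [ae_restrict_mem measurableSet_Ioi] with t (ht : 0 < t) x _
    have hexp : HasDerivAt (fun y : ℝ => -t ^ 2 / 2 + y * t) t x := by
      simpa using (hasDerivAt_mul_const t).const_add (-t ^ 2 / 2)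
    refine (hexp.exp.const_mul (t ^ p)).congr_deriv ?_
    rw [rpow_add_one ht.ne']
    ring

lemma tendsto_rpow_mul_exp_neg_sq_div_two_add_mul_atTop (p a : ℝ) :
    Tendsto (fun t : ℝ => t ^ p * exp (-t ^ 2 / 2 + a * t)) atTop (𝓝 0) := by
  have hmaj : Tendsto (fun t : ℝ => exp ((a + 1) ^ 2 / 2) * (t ^ p * exp (-1 * t)))
      atTop (𝓝 0) := by
    simpa using (tendsto_rpow_mul_exp_neg_mul_atTop_nhds_zero p 1 one_pos).const_mul
      (exp ((a + 1) ^ 2 / 2))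
  refine tendsto_of_tendsto_of_tendsto_of_le_of_le' tendsto_const_nhds hmaj ?_ ?_
  all_goals filter_upwards [eventually_ge_atTop (0 : ℝ)] with t ht
  · positivity
  · rw [mul_left_comm]
    refine mul_le_mul_of_nonneg_left ?_ (rpow_nonneg ht p)
    rw [← exp_add, exp_le_exp]
    nlinarith [sq_nonneg (t - (a + 1))]

lemma tiltedGaussMoment_add_one {β : ℝ} (hβ : 0 < β) (a : ℝ) :
    tiltedGaussMoment (β + 1) a
      = a * tiltedGaussMoment β a + β * tiltedGaussMoment (β - 1) a := by
  set f : ℝ → ℝ → ℝ := fun p t => t ^ p * exp (-t ^ 2 / 2 + a * t)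
  have hint : ∀ p, -1 < p → IntegrableOn (f p) (Ioi 0) :=
    fun p hp => integrableOn_tiltedGaussMoment_integrand hp a
  have hintPred := (hint (β - 1) (by linarith)).const_mul β
  have hintSelf := (hint β (by linarith)).const_mul a
  have hintSucc := hint (β + 1) (by linarith)
  have hderiv : ∀ t ∈ Ioi (0 : ℝ),
      HasDerivAt (f β) (β * f (β - 1) t + a * f β t - f (β + 1) t) t := by
    intro t (ht : 0 < t)
    have hquad : HasDerivAt (fun t : ℝ => -t ^ 2 / 2 + a * t) (-t + a) t := by
      refine (((hasDerivAt_pow 2 t).neg.div_const 2).add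
        ((hasDerivAt_id t).const_mul a)).congr_deriv ?_
      norm_num
      ring
    refine ((hasDerivAt_rpow_const (p := β) (Or.inl ht.ne')).mul hquad.exp).congr_deriv ?_
    simp only [f, rpow_add_one ht.ne']
    ring
  have hcont : ContinuousWithinAt (f β) (Ici 0) 0 :=
    ((continuousAt_rpow_const 0 β (Or.inr hβ.le)).mul (by fun_prop)).continuousWithinAt
  have hFTC := integral_Ioi_of_hasDerivAt_of_tendsto hcont hderiv
    ((hintPred.add hintSelf).sub hintSucc)
    (tendsto_rpow_mul_exp_neg_sq_div_two_add_mul_atTop β a)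
  rw [integral_sub ?_ hintSucc, integral_add hintPred hintSelf, integral_const_mul,
    integral_const_mul] at hFTC
  swap
  · exact hintPred.add hintSelf
  simp only [f, zero_rpow hβ.ne', zero_mul, sub_zero] at hFTC
  rw [tiltedGaussMoment, tiltedGaussMoment, tiltedGaussMoment]
  linarith

lemma hasDerivAt_const_mul_tiltedGaussMoment_comp {p : ℝ} (hp : -1 < p) (c b μ x : ℝ) :
    HasDerivAt (fun x => c * tiltedGaussMoment p (b * (x - μ)))
      (c * b * tiltedGaussMoment (p + 1) (b * (x - μ))) x := by
  have hlin : HasDerivAt (fun y : ℝ => b * (y - μ)) b x := by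
    simpa using ((hasDerivAt_id x).sub_const μ).const_mul b
  refine (((hasDerivAt_tiltedGaussMoment hp _).comp x hlin).const_mul c).congr_deriv ?_
  ring

lemma deriv_const_mul_tiltedGaussMoment_comp {p : ℝ} (hp : -1 < p) (c b μ : ℝ) :
    deriv (fun x => c * tiltedGaussMoment p (b * (x - μ)))
      = fun x => c * b * tiltedGaussMoment (p + 1) (b * (x - μ)) :=
  funext fun x => (hasDerivAt_const_mul_tiltedGaussMoment_comp hp c b μ x).deriv

lemma psi_eq_tiltedGaussMoment {κ σ : ℝ} (ρ μ : ℝ) (hκ : 0 < κ) (hσ : 0 < σ) :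
    psi κ μ σ ρ = fun x =>
      1 / Gamma (ρ / κ) * tiltedGaussMoment (ρ / κ - 1) (√(2 * κ) / σ * (x - μ)) := by
  funext x
  have hsq : √(2 * κ) ^ 2 = 2 * κ := sq_sqrt (by positivity)
  have hexponent :
      -(-((x - μ) / σ) * √(2 * κ)) ^ 2 / 4 = -(κ * (x - μ) ^ 2 / (2 * σ ^ 2)) := by
    rw [mul_pow, neg_sq, hsq]
    field_simp
    ring
  have hintegrand : ∀ t : ℝ, -t ^ 2 / 2 - -((x - μ) / σ) * √(2 * κ) * t
      = -t ^ 2 / 2 + √(2 * κ) / σ * (x - μ) * t := fun t => by ring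
  simp only [psi, Dcyl, tiltedGaussMoment, neg_neg, hexponent, hintegrand, exp_neg]
  rw [← mul_assoc, mul_div_assoc', mul_inv_cancel₀ (exp_ne_zero _)]

/-- `ψ` is strictly positive, strictly increasing, strictly convex, and solves
`(σ²/2)ψ'' + κ(μ−x)ψ' − ρψ = 0`. -/
theorem stmt6 (κ σ ρ μ : ℝ) (hκ : 0 < κ) (hσ : 0 < σ) (hρ : 0 < ρ) :
    (∀ x : ℝ, 0 < psi κ μ σ ρ x) ∧
      StrictMono (psi κ μ σ ρ) ∧
      StrictConvexOn ℝ Set.univ (psi κ μ σ ρ) ∧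
      ∀ x : ℝ,
        σ ^ 2 / 2 * iteratedDeriv 2 (psi κ μ σ ρ) x
          + κ * (μ - x) * deriv (psi κ μ σ ρ) x - ρ * psi κ μ σ ρ x = 0 := by
  set β := ρ / κ
  set b := √(2 * κ) / σ
  set c := 1 / Gamma β
  have hβ : 0 < β := div_pos hρ hκ
  have hb : 0 < b := div_pos (sqrt_pos.2 (by positivity)) hσ
  have hc : 0 < c := one_div_pos.2 (Gamma_pos_of_pos hβ)
  have hψ := psi_eq_tiltedGaussMoment ρ μ hκ hσ
  have hψ' : deriv (psi κ μ σ ρ) = fun x => c * b * tiltedGaussMoment β (b * (x - μ)) := by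
    rw [hψ, deriv_const_mul_tiltedGaussMoment_comp (by linarith), sub_add_cancel]
  have hψ'' : deriv^[2] (psi κ μ σ ρ)
      = fun x => c * b * b * tiltedGaussMoment (β + 1) (b * (x - μ)) := by
    rw [show deriv^[2] (psi κ μ σ ρ) = deriv (deriv (psi κ μ σ ρ)) from rfl, hψ',
      deriv_const_mul_tiltedGaussMoment_comp (by linarith)]
  refine ⟨fun x => ?_, strictMono_of_deriv_pos fun x => ?_,
    strictConvexOn_of_deriv2_pos convex_univ ?_ fun x _ => ?_, fun x => ?_⟩
  · rw [hψ]; exact mul_pos hc (tiltedGaussMoment_pos (by linarith) _)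
  · rw [hψ']; exact mul_pos (by positivity) (tiltedGaussMoment_pos (by linarith) _)
  · rw [hψ]
    exact fun x _ => (hasDerivAt_const_mul_tiltedGaussMoment_comp (by linarith) c b μ x)
      |>.continuousAt.continuousWithinAt
  · rw [hψ'']; exact mul_pos (by positivity) (tiltedGaussMoment_pos (by linarith) _)
  · have hb2 : σ ^ 2 * b ^ 2 = 2 * κ := by
      rw [div_pow, sq_sqrt (by positivity)]; field_simp
    rw [iteratedDeriv_eq_iterate, hψ'', hψ', hψ]
    simp only [tiltedGaussMoment_add_one hβ]
    -- after the recurrence, `σ²b²/2 = κ` and `κβ = ρ` cancel all terms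
    linear_combination (c * (b * (x - μ) * tiltedGaussMoment β (b * (x - μ))
      + β * tiltedGaussMoment (β - 1) (b * (x - μ))) / 2) * hb2
      - c * tiltedGaussMoment (β - 1) (b * (x - μ)) * (div_mul_cancel₀ ρ hκ.ne').symm
end

section
/- Let ψ be the strictly increasing positive fundamental solution of (σ²/2)u'' + κ(μ−x)u' − ρu = 0. Then for every k ∈ ℕ₀, the k-th derivative ψ^{(k)} is strictly positive, strictly increasing, strictly convex, and satisfies (σ²/2)(ψ^{(k)})'' + κ(μ−x)(ψ^{(k)})' − (ρ+kκ)ψ^{(k)} = 0 for all x ∈ ℝ. -/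
/-!
With `a = √(2κ)/σ` and `β = ρ/κ`, the integral representation of `D_{-β}` turns the Gaussian
factor of `ψ` into `1`, leaving `ψ(x) = Γ(β)⁻¹ G_{β-1}(a(x - μ))`, where
`G_p(s) = ∫₀^∞ t^p e^{-t²/2 + st} dt`. Differentiating under the integral gives `G_p' = G_{p+1}`,
so `ψ^{(k)}(x) = Γ(β)⁻¹ aᵏ G_{β+k-1}(a(x - μ))`, which is positive for every `k`; hence every
derivative is increasing and convex. Integrating `(t^q e^{-t²/2 + st})'` over `(0, ∞)` gives
`G_{q+1}(s) = s G_q(s) + q G_{q-1}(s)`, and with `σ²a²/2 = κ` this is the shifted ODE.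
-/

open Set

open MeasureTheory Real Filter Topology

noncomputable def gaussMoment (p s : ℝ) : ℝ :=
  ∫ t in Ioi (0 : ℝ), t ^ p * exp (-t ^ 2 / 2 + s * t)

section GaussMoment

lemma exp_neg_sq_half_add_mul_le (s t : ℝ) :
    exp (-t ^ 2 / 2 + s * t) ≤ exp ((s + 1) ^ 2 / 2) * exp (-t) := by
  rw [← exp_add, exp_le_exp]
  nlinarith [sq_nonneg (t - (s + 1))]

lemma continuousOn_rpow_mul_exp_neg_sq_half (p s : ℝ) :
    ContinuousOn (fun t : ℝ => t ^ p * exp (-t ^ 2 / 2 + s * t)) (Ioi 0) :=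
  (continuousOn_id.rpow_const fun _ ht => Or.inl (ne_of_gt ht)).mul (by fun_prop)

lemma integrableOn_rpow_mul_exp_neg_sq_half {p : ℝ} (hp : -1 < p) (s : ℝ) :
    IntegrableOn (fun t : ℝ => t ^ p * exp (-t ^ 2 / 2 + s * t)) (Ioi 0) := by
  have hGamma : IntegrableOn (fun t : ℝ => exp ((s + 1) ^ 2 / 2) * (exp (-t) * t ^ p)) (Ioi 0) := by
    have h := GammaIntegral_convergent (by linarith : 0 < p + 1)
    rw [add_sub_cancel_right] at h
    exact h.const_mul _
  refine hGamma.mono' ((continuousOn_rpow_mul_exp_neg_sq_half p s).aestronglyMeasurable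
    measurableSet_Ioi) ?_
  filter_upwards [ae_restrict_mem measurableSet_Ioi] with t (ht : 0 < t)
  rw [norm_of_nonneg (by positivity)]
  calc t ^ p * exp (-t ^ 2 / 2 + s * t) ≤ t ^ p * (exp ((s + 1) ^ 2 / 2) * exp (-t)) := by
        gcongr; exact exp_neg_sq_half_add_mul_le s t
    _ = exp ((s + 1) ^ 2 / 2) * (exp (-t) * t ^ p) := by ring

lemma tendsto_rpow_mul_exp_neg_sq_half_atTop (q s : ℝ) :
    Tendsto (fun t : ℝ => t ^ q * exp (-t ^ 2 / 2 + s * t)) atTop (𝓝 0) := by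
  have hlim : Tendsto (fun t : ℝ => exp ((s + 1) ^ 2 / 2) * (t ^ q * exp (-1 * t))) atTop (𝓝 0) := by
    simpa using (tendsto_rpow_mul_exp_neg_mul_atTop_nhds_zero q 1 one_pos).const_mul
      (exp ((s + 1) ^ 2 / 2))
  refine tendsto_of_tendsto_of_tendsto_of_le_of_le' tendsto_const_nhds hlim ?_ ?_ <;>
    filter_upwards [eventually_gt_atTop (0 : ℝ)] with t ht
  · positivity
  · calc t ^ q * exp (-t ^ 2 / 2 + s * t) ≤ t ^ q * (exp ((s + 1) ^ 2 / 2) * exp (-t)) := by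
          gcongr; exact exp_neg_sq_half_add_mul_le s t
      _ = exp ((s + 1) ^ 2 / 2) * (t ^ q * exp (-1 * t)) := by ring_nf

lemma gaussMoment_pos {p : ℝ} (hp : -1 < p) (s : ℝ) : 0 < gaussMoment p s := by
  have hpos : ∀ t ∈ Ioi (0 : ℝ), 0 < t ^ p * exp (-t ^ 2 / 2 + s * t) := fun t (ht : 0 < t) => by
    positivity
  rw [gaussMoment, setIntegral_pos_iff_support_of_nonneg_ae
    ((ae_restrict_mem measurableSet_Ioi).mono fun t ht => (hpos t ht).le)
    (integrableOn_rpow_mul_exp_neg_sq_half hp s),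
    inter_eq_right.2 fun t ht => Function.mem_support.2 (hpos t ht).ne']
  simp

lemma hasDerivAt_gaussMoment {p : ℝ} (hp : -1 < p) (s : ℝ) :
    HasDerivAt (gaussMoment p) (gaussMoment (p + 1) s) s := by
  refine (hasDerivAt_integral_of_dominated_loc_of_deriv_le (μ := volume.restrict (Ioi 0))
    (F := fun u t => t ^ p * exp (-t ^ 2 / 2 + u * t))
    (F' := fun u t => t ^ (p + 1) * exp (-t ^ 2 / 2 + u * t))
    (bound := fun t => t ^ (p + 1) * exp (-t ^ 2 / 2 + (s + 1) * t))
    (Metric.ball_mem_nhds s zero_lt_one)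
    (Eventually.of_forall fun u => (continuousOn_rpow_mul_exp_neg_sq_half p u).aestronglyMeasurable
      measurableSet_Ioi)
    (integrableOn_rpow_mul_exp_neg_sq_half hp s)
    ((continuousOn_rpow_mul_exp_neg_sq_half (p + 1) s).aestronglyMeasurable measurableSet_Ioi)
    ?_ (integrableOn_rpow_mul_exp_neg_sq_half (by linarith) (s + 1)) ?_).2 <;>
    filter_upwards [ae_restrict_mem measurableSet_Ioi] with t (ht : 0 < t) u hu
  · have hus : u ≤ s + 1 := by linarith [(abs_lt.1 (mem_ball_iff_norm.1 hu)).2]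
    rw [norm_of_nonneg (by positivity)]
    gcongr
  · have h := ((((hasDerivAt_id' u).mul_const t).const_add (-t ^ 2 / 2)).exp).const_mul (t ^ p)
    exact h.congr_deriv (by rw [rpow_add_one ht.ne']; ring)

lemma gaussMoment_add_one {q : ℝ} (hq : 0 < q) (s : ℝ) :
    gaussMoment (q + 1) s = s * gaussMoment q s + q * gaussMoment (q - 1) s := by
  set E : ℝ → ℝ := fun t => exp (-t ^ 2 / 2 + s * t)
  have hint : ∀ {p : ℝ}, -1 < p → Integrable (fun t => t ^ p * E t) (volume.restrict (Ioi 0)) :=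
    fun hp => integrableOn_rpow_mul_exp_neg_sq_half hp s
  have hderiv : ∀ t ∈ Ioi (0 : ℝ), HasDerivAt (fun t => t ^ q * E t)
      (q * (t ^ (q - 1) * E t) + s * (t ^ q * E t) - t ^ (q + 1) * E t) t := fun t (ht : 0 < t) => by
    have hE : HasDerivAt E ((s - t) * E t) t := by
      have hpoly : HasDerivAt (fun t => -t ^ 2 / 2 + s * t) (s - t) t :=
        (((hasDerivAt_pow 2 t).fun_neg.div_const 2).fun_add
          ((hasDerivAt_id' t).const_mul s)).congr_deriv (by ring)
      exact hpoly.exp.congr_deriv (mul_comm _ _)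
    exact ((hasDerivAt_rpow_const (p := q) (Or.inl ht.ne')).mul hE).congr_deriv
      (by rw [rpow_add_one ht.ne']; ring)
  have hcont : ContinuousWithinAt (fun t => t ^ q * E t) (Ici 0) 0 :=
    ((continuousAt_rpow_const 0 q (Or.inr hq.le)).mul (by fun_prop)).continuousWithinAt
  have hA := (hint (p := q - 1) (by linarith)).const_mul q
  have hB := (hint (p := q) (by linarith)).const_mul s
  have hC := hint (p := q + 1) (by linarith)
  -- the boundary terms vanish at both ends, so the integral of the derivative is zero
  have hFTC := integral_Ioi_of_hasDerivAt_of_tendsto hcont hderiv ((hA.fun_add hB).sub' hC)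
    (tendsto_rpow_mul_exp_neg_sq_half_atTop q s)
  rw [integral_sub (hA.fun_add hB) hC, integral_add hA hB, integral_const_mul, integral_const_mul,
    zero_rpow hq.ne', zero_mul, sub_zero] at hFTC
  simp only [gaussMoment]
  linarith

lemma iteratedDeriv_gaussMoment_affine {p : ℝ} (hp : -1 < p) (c a μ : ℝ) (k : ℕ) :
    iteratedDeriv k (fun x => c * gaussMoment p (a * (x - μ))) =
      fun x => c * a ^ k * gaussMoment (p + k) (a * (x - μ)) := by
  induction k with
  | zero => simp
  | succ k ih =>
    rw [iteratedDeriv_succ, ih]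
    funext x
    have hpk : -1 < p + k := by linarith [k.cast_nonneg (α := ℝ)]
    have hlin : HasDerivAt (fun x => a * (x - μ)) a x := by
      simpa using ((hasDerivAt_id x).sub_const μ).const_mul a
    have h : HasDerivAt (fun x => c * a ^ k * gaussMoment (p + k) (a * (x - μ)))
        (c * a ^ k * (gaussMoment (p + k + 1) (a * (x - μ)) * a)) x :=
      ((hasDerivAt_gaussMoment hpk _).comp x hlin).const_mul _
    rw [h.deriv]
    push_cast
    ring_nf

end GaussMoment

section Psi

variable {κ σ ρ : ℝ} (μ : ℝ)

lemma Dcyl_eq_gaussMoment (α x : ℝ) :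
    Dcyl α x = exp (-x ^ 2 / 4) / Gamma (-α) * gaussMoment (-α - 1) (-x) := by
  simp only [Dcyl, gaussMoment, neg_mul, sub_eq_add_neg]

lemma psi_eq_gaussMoment (hκ : 0 ≤ κ) :
    psi κ μ σ ρ = fun x => (Gamma (ρ / κ))⁻¹ * gaussMoment (ρ / κ - 1) (√(2 * κ) / σ * (x - μ)) := by
  funext x
  have hsq : √(2 * κ) ^ 2 = 2 * κ := sq_sqrt (by linarith)
  have hcancel : exp (κ * (x - μ) ^ 2 / (2 * σ ^ 2)) *
      exp (-(-((x - μ) / σ) * √(2 * κ)) ^ 2 / 4) = 1 := by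
    rw [← exp_add, ← exp_zero, mul_pow, hsq]
    ring_nf
  rw [psi, Dcyl_eq_gaussMoment, neg_neg, ← mul_assoc, mul_div_assoc', hcancel, one_div]
  ring_nf

lemma iteratedDeriv_psi (hκ : 0 < κ) (hρ : 0 < ρ) (k : ℕ) :
    iteratedDeriv k (psi κ μ σ ρ) = fun x => (Gamma (ρ / κ))⁻¹ * (√(2 * κ) / σ) ^ k *
      gaussMoment (ρ / κ - 1 + k) (√(2 * κ) / σ * (x - μ)) := by
  rw [psi_eq_gaussMoment μ hκ.le]
  exact iteratedDeriv_gaussMoment_affine (by linarith [div_pos hρ hκ]) _ _ _ _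

lemma iteratedDeriv_psi_pos (hκ : 0 < κ) (hσ : 0 < σ) (hρ : 0 < ρ) (k : ℕ) (x : ℝ) :
    0 < iteratedDeriv k (psi κ μ σ ρ) x := by
  have hG := gaussMoment_pos (p := ρ / κ - 1 + k)
    (by linarith [div_pos hρ hκ, k.cast_nonneg (α := ℝ)]) (√(2 * κ) / σ * (x - μ))
  have hΓ := Gamma_pos_of_pos (div_pos hρ hκ)
  have ha : 0 < √(2 * κ) := sqrt_pos.2 (by linarith)
  rw [iteratedDeriv_psi μ hκ hρ]
  positivity

lemma iteratedDeriv_psi_ode (hκ : 0 < κ) (hσ : σ ≠ 0) (hρ : 0 < ρ) (k : ℕ) (x : ℝ) :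
    σ ^ 2 / 2 * iteratedDeriv (k + 2) (psi κ μ σ ρ) x
      + κ * (μ - x) * iteratedDeriv (k + 1) (psi κ μ σ ρ) x
      - (ρ + k * κ) * iteratedDeriv k (psi κ μ σ ρ) x = 0 := by
  set a := √(2 * κ) / σ
  set q := ρ / κ + k
  have hq : 0 < q := by positivity
  have haσ : σ ^ 2 / 2 * a ^ 2 = κ := by
    rw [div_pow, sq_sqrt (by linarith)]
    field_simp
  have hρk : ρ + k * κ = κ * q := by
    simp only [q]
    field_simp
  have hrec := gaussMoment_add_one hq (a * (x - μ))
  simp only [iteratedDeriv_psi μ hκ hρ]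
  rw [show ρ / κ - 1 + ((k + 2 : ℕ) : ℝ) = q + 1 by push_cast; ring,
    show ρ / κ - 1 + ((k + 1 : ℕ) : ℝ) = q by push_cast; ring,
    show ρ / κ - 1 + (k : ℝ) = q - 1 by ring, hρk, hrec]
  linear_combination (Gamma (ρ / κ))⁻¹ * a ^ k *
    (a * (x - μ) * gaussMoment q (a * (x - μ)) + q * gaussMoment (q - 1) (a * (x - μ))) * haσ

end Psi

lemma strictConvexOn_univ_iteratedDeriv {f : ℝ → ℝ} {k : ℕ}
    (h₁ : ∀ x, 0 < iteratedDeriv (k + 1) f x) (h₂ : ∀ x, 0 < iteratedDeriv (k + 2) f x) :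
    StrictConvexOn ℝ univ (iteratedDeriv k f) := by
  have hdiff : Differentiable ℝ (iteratedDeriv k f) := fun x =>
    differentiableAt_of_deriv_ne_zero (by rw [← iteratedDeriv_succ]; exact (h₁ x).ne')
  refine strictConvexOn_univ_of_deriv2_pos hdiff.continuous fun x => ?_
  rw [Function.iterate_succ_apply', Function.iterate_one, ← iteratedDeriv_succ,
    ← iteratedDeriv_succ]
  exact h₂ x

/-- Every derivative `ψ^{(k)}` is strictly positive, strictly increasing, strictly convex,
and solves `(σ²/2)(ψ^{(k)})'' + κ(μ−x)(ψ^{(k)})' − (ρ+kκ)ψ^{(k)} = 0`. -/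
theorem stmt7 (κ σ ρ μ : ℝ) (hκ : 0 < κ) (hσ : 0 < σ) (hρ : 0 < ρ) :
    ∀ k : ℕ,
      (∀ x : ℝ, 0 < iteratedDeriv k (psi κ μ σ ρ) x) ∧
        StrictMono (iteratedDeriv k (psi κ μ σ ρ)) ∧
        StrictConvexOn ℝ Set.univ (iteratedDeriv k (psi κ μ σ ρ)) ∧
        ∀ x : ℝ,
          σ ^ 2 / 2 * iteratedDeriv (k + 2) (psi κ μ σ ρ) x
            + κ * (μ - x) * iteratedDeriv (k + 1) (psi κ μ σ ρ) x
            - (ρ + k * κ) * iteratedDeriv k (psi κ μ σ ρ) x = 0 := by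
  have hpos := iteratedDeriv_psi_pos μ hκ hσ hρ
  intro k
  refine ⟨hpos k, strictMono_of_deriv_pos fun x => ?_,
    strictConvexOn_univ_iteratedDeriv (hpos (k + 1)) (hpos (k + 2)),
    iteratedDeriv_psi_ode μ hκ hσ.ne' hρ k⟩
  rw [← iteratedDeriv_succ]
  exact hpos (k + 1) x
end

section
/- Let H(x) = ψ'(x)(c − R̃(x,ȳ)) + (ρ+κ)^{−1}ψ(x) where R̃(x,y) = (μκ + ρx − β(ρ+2κ)y)/(ρ(ρ+κ)) and ψ is the increasing fundamental solution of the OU equation. Then the equation H(x) = 0 has exactly one solution x̃ ∈ ℝ. -/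
/-! Up to the factor `Γ(ρ/κ)⁻¹`, `ψ(x) = ∫₀^∞ t^(ρ/κ-1) exp(-t²/2 + A (x-μ) t) dt` with
`A = √(2κ)/σ`; differentiating under the integral keeps this shape, so `ψ`, `ψ'`, `ψ''` are
positive and `ψ''` is increasing. Since `c - R̃(x, ȳ) = (B - x)/(ρ+κ)` for a constant `B`,
`H(x) = 0` says that the tangent to `ψ` at `x` passes through `(B, 0)`. The function
`ψ'(x)(B - x) + ψ(x)` is positive for `x ≤ B`, has derivative `ψ''(x)(B - x) < 0` beyond `B`,
and tends to `-∞` because `ψ''` is bounded below there. -/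
open Set

/-- `R̃(z,y) = (μκ + ρz − β(ρ+2κ)y)/(ρ(ρ+κ))`. -/
noncomputable def Rt (κ μ ρ β : ℝ) (z y : ℝ) : ℝ :=
  (μ * κ + ρ * z - β * (ρ + 2 * κ) * y) / (ρ * (ρ + κ))

/-- `Q_k(z) = ψ^{(k)}(z)ψ^{(k+2)}(z) − (ψ^{(k+1)}(z))²`. -/
noncomputable def Q (κ μ σ ρ : ℝ) (k : ℕ) (z : ℝ) : ℝ :=
  iteratedDeriv k (psi κ μ σ ρ) z * iteratedDeriv (k + 2) (psi κ μ σ ρ) z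
    - (iteratedDeriv (k + 1) (psi κ μ σ ρ) z) ^ 2

/-- `D(y,z) = ψ(z)[(ρ+κ)(c − R̃(z,y))Q₁(z) + Q₀'(z)]`. -/
noncomputable def Dfun (κ μ σ ρ β c : ℝ) (y z : ℝ) : ℝ :=
  psi κ μ σ ρ z *
    ((ρ + κ) * (c - Rt κ μ ρ β z y) * Q κ μ σ ρ 1 z + deriv (Q κ μ σ ρ 0) z)

/-- `N(y,z) = Q₀(z)[((ρ+2κ)/ρ)ψ'(z) + (ρ+κ)(c − R̃(z,y))ψ''(z) + ψ'(z)]`. -/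
noncomputable def Nfun (κ μ σ ρ β c : ℝ) (y z : ℝ) : ℝ :=
  Q κ μ σ ρ 0 z *
    ((ρ + 2 * κ) / ρ * deriv (psi κ μ σ ρ) z +
      ((ρ + κ) * (c - Rt κ μ ρ β z y) * iteratedDeriv 2 (psi κ μ σ ρ) z
        + deriv (psi κ μ σ ρ) z))

/-- `H(x) = ψ'(x)(c − R̃(x, ybar)) + (ρ+κ)⁻¹ψ(x)`. -/
noncomputable def Hfun (κ μ σ ρ β c ybar : ℝ) (x : ℝ) : ℝ :=
  deriv (psi κ μ σ ρ) x * (c - Rt κ μ ρ β x ybar) + (ρ + κ)⁻¹ * psi κ μ σ ρ x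

open MeasureTheory

theorem exists_ge_lt_zero_of_hasDerivAt_le_neg {F F' : ℝ → ℝ} {a m : ℝ}
    (hF : ∀ x, HasDerivAt F (F' x) x) (hm : 0 < m) (hF' : ∀ x, a ≤ x → F' x ≤ -m) :
    ∃ y, a ≤ y ∧ F y < 0 := by
  set y := a + (|F a| + 1) / m
  have hay : a ≤ y := le_add_of_nonneg_right (by positivity)
  have hdrop : F y - F a ≤ -m * (y - a) := by
    refine (convex_Ici a).image_sub_le_mul_sub_of_deriv_le
      (fun x _ => (hF x).continuousAt.continuousWithinAt)
      (fun x _ => (hF x).differentiableAt.differentiableWithinAt) (fun x hx => ?_)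
      a self_mem_Ici y hay hay
    rw [interior_Ici] at hx
    rw [(hF x).deriv]
    exact hF' x (le_of_lt hx)
  have hmy : m * (y - a) = |F a| + 1 := by
    rw [add_sub_cancel_left]
    field_simp
  exact ⟨y, hay, by linarith [le_abs_self (F a)]⟩

/-- The tangent to `f` at `x` passes through `(B, 0)` for exactly one `x`. -/
theorem existsUnique_deriv_mul_sub_add_eq_zero {f f' f'' : ℝ → ℝ}
    (hf : ∀ x, HasDerivAt f (f' x) x) (hf' : ∀ x, HasDerivAt f' (f'' x) x)
    (hf_pos : ∀ x, 0 < f x) (hf'_nonneg : ∀ x, 0 ≤ f' x) (hf''_pos : ∀ x, 0 < f'' x)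
    (hf''_mono : Monotone f'') (B : ℝ) :
    ∃! x, f' x * (B - x) + f x = 0 := by
  set F := fun x => f' x * (B - x) + f x
  have hF : ∀ x, HasDerivAt F (f'' x * (B - x)) x := fun x => by
    refine (((hf' x).mul ((hasDerivAt_id x).const_sub B)).add (hf x)).congr_deriv ?_
    simp only [id_eq]
    ring
  have hF_pos : ∀ x ≤ B, 0 < F x := fun x hx =>
    add_pos_of_nonneg_of_pos (mul_nonneg (hf'_nonneg x) (by linarith)) (hf_pos x)
  have hF_anti : StrictAntiOn F (Ici B) := by
    refine strictAntiOn_of_deriv_neg (convex_Ici B)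
      (fun x _ => (hF x).continuousAt.continuousWithinAt) fun x hx => ?_
    rw [interior_Ici] at hx
    rw [(hF x).deriv]
    exact mul_neg_of_pos_of_neg (hf''_pos x) (by linarith [mem_Ioi.1 hx])
  obtain ⟨y, hBy, hFy⟩ : ∃ y, B + 1 ≤ y ∧ F y < 0 :=
    exists_ge_lt_zero_of_hasDerivAt_le_neg hF (hf''_pos (B + 1)) fun x hx => by
      nlinarith [hf''_mono hx, hf''_pos (B + 1)]
  obtain ⟨x, -, hFx⟩ := intermediate_value_Icc' (by linarith : B ≤ y)
    (fun z _ => (hF z).continuousAt.continuousWithinAt) ⟨hFy.le, (hF_pos B le_rfl).le⟩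
  have hB_le : ∀ z, F z = 0 → z ∈ Ici B := fun z hz =>
    le_of_not_gt fun h => (hF_pos z h.le).ne' hz
  exact ⟨x, hFx, fun z hz => hF_anti.injOn (hB_le z hz) (hB_le x hFx) (hz.trans hFx.symm)⟩

noncomputable def gaussMomentIntegral (p b : ℝ) : ℝ :=
  ∫ t in Ioi (0 : ℝ), t ^ p * Real.exp (-t ^ 2 / 2 + b * t)

theorem continuousOn_gaussMomentIntegrand (p b : ℝ) :
    ContinuousOn (fun t : ℝ => t ^ p * Real.exp (-t ^ 2 / 2 + b * t)) (Ioi 0) :=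
  (continuousOn_id.rpow_const fun t ht => Or.inl (ne_of_gt ht)).mul (by fun_prop)

theorem integrableOn_gaussMomentIntegrand {p : ℝ} (hp : -1 < p) (b : ℝ) :
    IntegrableOn (fun t : ℝ => t ^ p * Real.exp (-t ^ 2 / 2 + b * t)) (Ioi 0) := by
  have hmaj : IntegrableOn
      (fun t : ℝ => Real.exp (b ^ 2) * (t ^ p * Real.exp (-(4⁻¹) * t ^ 2))) (Ioi 0) :=
    (integrableOn_rpow_mul_exp_neg_mul_sq (by norm_num) hp).const_mul _
  refine hmaj.mono' ((continuousOn_gaussMomentIntegrand p b).aestronglyMeasurable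
    measurableSet_Ioi) ?_
  filter_upwards [ae_restrict_mem measurableSet_Ioi] with t ht
  have ht0 : (0 : ℝ) < t := ht
  rw [Real.norm_eq_abs, abs_of_nonneg (by positivity), mul_left_comm]
  gcongr
  -- completing the square: `-t²/2 + b t ≤ b² - t²/4`
  rw [← Real.exp_add]
  exact Real.exp_le_exp.2 (by nlinarith [sq_nonneg (t / 2 - b)])

theorem gaussMomentIntegral_pos {p : ℝ} (hp : -1 < p) (b : ℝ) : 0 < gaussMomentIntegral p b := by
  have hpos : ∀ t ∈ Ioi (0 : ℝ), 0 < t ^ p * Real.exp (-t ^ 2 / 2 + b * t) := fun t ht => by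
    have ht0 : (0 : ℝ) < t := ht
    positivity
  have hnn : 0 ≤ᵐ[volume.restrict (Ioi (0 : ℝ))]
      fun t : ℝ => t ^ p * Real.exp (-t ^ 2 / 2 + b * t) := by
    filter_upwards [ae_restrict_mem measurableSet_Ioi] with t ht using (hpos t ht).le
  rw [gaussMomentIntegral,
    setIntegral_pos_iff_support_of_nonneg_ae hnn (integrableOn_gaussMomentIntegrand hp b)]
  calc (0 : ENNReal) < volume (Ioi (0 : ℝ)) := by simp [Real.volume_Ioi]
    _ ≤ _ := measure_mono fun t ht => by exact ⟨(hpos t ht).ne', ht⟩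

theorem hasDerivAt_gaussMomentIntegral {p : ℝ} (hp : -1 < p) (b : ℝ) :
    HasDerivAt (gaussMomentIntegral p) (gaussMomentIntegral (p + 1) b) b := by
  have hp1 : (-1 : ℝ) < p + 1 := by linarith
  refine (hasDerivAt_integral_of_dominated_loc_of_deriv_le
    (μ := volume.restrict (Ioi (0 : ℝ)))
    (F' := fun b t => t ^ (p + 1) * Real.exp (-t ^ 2 / 2 + b * t))
    (bound := fun t => t ^ (p + 1) * Real.exp (-t ^ 2 / 2 + (|b| + 1) * t))
    (Metric.ball_mem_nhds b one_pos)
    (Filter.Eventually.of_forall fun b' =>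
      (continuousOn_gaussMomentIntegrand p b').aestronglyMeasurable measurableSet_Ioi)
    (integrableOn_gaussMomentIntegrand hp b)
    ((continuousOn_gaussMomentIntegrand (p + 1) b).aestronglyMeasurable measurableSet_Ioi)
    ?_ (integrableOn_gaussMomentIntegrand hp1 (|b| + 1)) ?_).2
  · filter_upwards [ae_restrict_mem measurableSet_Ioi] with t ht b' hb'
    have ht0 : (0 : ℝ) < t := ht
    have hb'_le : b' ≤ |b| + 1 := by
      linarith [le_abs_self b, (abs_lt.1 (Metric.mem_ball.1 hb')).2]
    rw [Real.norm_eq_abs, abs_of_nonneg (by positivity)]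
    gcongr
  · filter_upwards [ae_restrict_mem measurableSet_Ioi] with t ht b' _
    have ht0 : (0 : ℝ) < t := ht
    have hexp : HasDerivAt (fun y : ℝ => -t ^ 2 / 2 + y * t) t b' := by
      simpa using ((hasDerivAt_id b').mul_const t).const_add (-t ^ 2 / 2)
    refine (hexp.exp.const_mul (t ^ p)).congr_deriv ?_
    rw [Real.rpow_add_one ht0.ne']
    ring

theorem strictMono_gaussMomentIntegral {p : ℝ} (hp : -1 < p) :
    StrictMono (gaussMomentIntegral p) :=
  strictMono_of_hasDerivAt_pos (hasDerivAt_gaussMomentIntegral hp)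
    fun _ => gaussMomentIntegral_pos (by linarith) _

theorem hasDerivAt_const_mul_gaussMomentIntegral_affine {p : ℝ} (hp : -1 < p) (C A μ x : ℝ) :
    HasDerivAt (fun x => C * gaussMomentIntegral p (A * (x - μ)))
      (C * A * gaussMomentIntegral (p + 1) (A * (x - μ))) x := by
  have hlin : HasDerivAt (fun x : ℝ => A * (x - μ)) A x := by
    simpa using ((hasDerivAt_id x).sub_const μ).const_mul A
  refine (((hasDerivAt_gaussMomentIntegral hp _).comp x hlin).const_mul C).congr_deriv ?_
  ring

theorem existsUnique_gaussMomentIntegral_tangent_eq_zero {p C A : ℝ} (hp : -1 < p)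
    (hC : 0 < C) (hA : 0 < A) (μ B : ℝ) :
    ∃! x, C * A * gaussMomentIntegral (p + 1) (A * (x - μ)) * (B - x)
      + C * gaussMomentIntegral p (A * (x - μ)) = 0 := by
  have hpos : ∀ n : ℕ, ∀ b, 0 < gaussMomentIntegral (p + n) b := fun n =>
    gaussMomentIntegral_pos (by linarith [(Nat.cast_nonneg n : (0 : ℝ) ≤ n)])
  have hpos1 := hpos 1
  have hpos2 := hpos 2
  push_cast at hpos1 hpos2
  refine existsUnique_deriv_mul_sub_add_eq_zero
    (hasDerivAt_const_mul_gaussMomentIntegral_affine hp C A μ)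
    (hasDerivAt_const_mul_gaussMomentIntegral_affine (by linarith) (C * A) A μ)
    (fun x => by simpa using mul_pos hC (hpos 0 (A * (x - μ))))
    (fun x => (mul_pos (mul_pos hC hA) (hpos1 _)).le)
    (fun x => by rw [add_assoc, one_add_one_eq_two]; exact mul_pos (by positivity) (hpos2 _))
    (fun x y hxy => ?_) B
  dsimp only
  rw [add_assoc, one_add_one_eq_two]
  gcongr
  exact (strictMono_gaussMomentIntegral (by linarith)).monotone (by gcongr)

theorem psi_eq_gaussMomentIntegral {κ σ : ℝ} (hκ : 0 < κ) (hσ : 0 < σ) (μ ρ : ℝ) :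
    psi κ μ σ ρ = fun x => (Real.Gamma (ρ / κ))⁻¹ *
      gaussMomentIntegral (ρ / κ - 1) (Real.sqrt (2 * κ) / σ * (x - μ)) := by
  funext x
  have hs : Real.sqrt (2 * κ) ^ 2 = 2 * κ := Real.sq_sqrt (by linarith)
  -- the Gaussian prefactors of `psi` and of `Dcyl` cancel
  have hprefactor : Real.exp (κ * (x - μ) ^ 2 / (2 * σ ^ 2)) *
      Real.exp (-(-((x - μ) / σ) * Real.sqrt (2 * κ)) ^ 2 / 4) = 1 := by
    rw [← Real.exp_add, Real.exp_eq_one_iff, mul_pow, neg_sq, hs]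
    field_simp
    ring
  have hexponent : ∀ t : ℝ, -t ^ 2 / 2 - -((x - μ) / σ) * Real.sqrt (2 * κ) * t
      = -t ^ 2 / 2 + Real.sqrt (2 * κ) / σ * (x - μ) * t := fun t => by ring
  simp only [psi, Dcyl, neg_neg, gaussMomentIntegral, hexponent]
  linear_combination ((Real.Gamma (ρ / κ))⁻¹ * ∫ t in Ioi (0 : ℝ), t ^ (ρ / κ - 1) *
      Real.exp (-t ^ 2 / 2 + Real.sqrt (2 * κ) / σ * (x - μ) * t)) * hprefactor

theorem stmt11_general (κ σ ρ μ β c ybar : ℝ) (hκ : 0 < κ) (hσ : 0 < σ) (hρ : 0 < ρ) :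
    ∃! x : ℝ, Hfun κ μ σ ρ β c ybar x = 0 := by
  have hp : -1 < ρ / κ - 1 := by linarith [div_pos hρ hκ]
  have hC : 0 < (Real.Gamma (ρ / κ))⁻¹ := inv_pos.2 (Real.Gamma_pos_of_pos (div_pos hρ hκ))
  have hA : 0 < Real.sqrt (2 * κ) / σ := div_pos (Real.sqrt_pos.2 (by linarith)) hσ
  set B := (ρ + κ) * c - (μ * κ - β * (ρ + 2 * κ) * ybar) / ρ
  have hH : ∀ x, Hfun κ μ σ ρ β c ybar x
      = (ρ + κ)⁻¹ * (deriv (psi κ μ σ ρ) x * (B - x) + psi κ μ σ ρ x) := fun x => by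
    rw [Hfun, Rt]
    simp only [B]
    field_simp
    ring
  refine (existsUnique_congr fun x => ?_).2
    (existsUnique_gaussMomentIntegral_tangent_eq_zero hp hC hA μ B)
  rw [hH, mul_eq_zero, or_iff_right (inv_ne_zero (by linarith)), psi_eq_gaussMomentIntegral hκ hσ,
    (hasDerivAt_const_mul_gaussMomentIntegral_affine hp _ _ μ x).deriv, sub_add_cancel]

/-- The equation `H(x) = 0` has exactly one solution `x̃ ∈ ℝ`. -/
theorem stmt11 (κ σ ρ μ β c ybar : ℝ) (hκ : 0 < κ) (hσ : 0 < σ) (hρ : 0 < ρ)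
    (hβ : 0 < β) (hc : 0 ≤ c) (hybar : 0 < ybar) :
    ∃! x : ℝ, Hfun κ μ σ ρ β c ybar x = 0 :=
  stmt11_general κ σ ρ μ β c ybar hκ hσ hρ
end

section
/- Suppose A : [0,ȳ] → ℝ satisfies A(ȳ) = 0 and the linear ODE A'(y) = −β(ψ''(F̃(y))/ψ'(F̃(y)))A(y) − 1/((ρ+κ)ψ'(F̃(y))) for some continuous function F̃ : [0,ȳ] → ℝ. Then A(y) > 0 and A'(y) < 0 for all y ∈ [0,ȳ). -/
open Set Filter Topology


/-- If `A(ybar) = 0` and `A'(y) = −β(ψ''(F̃(y))/ψ'(F̃(y)))A(y) − 1/((ρ+κ)ψ'(F̃(y)))` on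
`[0, ybar]` for a continuous `F̃`, with `ψ' > 0`, `ψ'' > 0`, then `A > 0` and `A' < 0`
on `[0, ybar)`. -/
theorem stmt15 (κ σ ρ β ybar : ℝ) (hκ : 0 < κ) (hσ : 0 < σ) (hρ : 0 < ρ)
    (hβ : 0 < β) (hybar : 0 < ybar)
    (ψ : ℝ → ℝ) (hψ' : ∀ x, 0 < deriv ψ x) (hψ'' : ∀ x, 0 < iteratedDeriv 2 ψ x)
    (Ft : ℝ → ℝ) (hFt : Continuous Ft)
    (A : ℝ → ℝ) (hterm : A ybar = 0)
    (hODE : ∀ y ∈ Set.Icc (0 : ℝ) ybar,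
      HasDerivAt A
        (-β * (iteratedDeriv 2 ψ (Ft y) / deriv ψ (Ft y)) * A y
          - 1 / ((ρ + κ) * deriv ψ (Ft y))) y) :
    ∀ y ∈ Set.Ico (0 : ℝ) ybar, 0 < A y ∧ deriv A y < 0 := by
  have hρκ : 0 < ρ + κ := by linarith
  have hDpos : ∀ y : ℝ, 0 < 1 / ((ρ + κ) * deriv ψ (Ft y)) := by
    intro y
    have := hψ' (Ft y)
    positivity
  have hcont : ContinuousOn A (Icc (0:ℝ) ybar) := fun y hy =>
    (hODE y hy).continuousAt.continuousWithinAt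
  -- at zeros of A, the derivative is strictly negative
  have hzero : ∀ y ∈ Icc (0:ℝ) ybar, A y = 0 →
      HasDerivAt A (-(1 / ((ρ + κ) * deriv ψ (Ft y)))) y := by
    intro y hy h0
    have h := hODE y hy
    rw [h0] at h
    simpa using h
  -- helper: A cannot be negative on [0, ybar)
  have h1 : ∀ y₀ ∈ Ico (0:ℝ) ybar, A y₀ < 0 → False := by
    intro y₀ hy₀ hA0
    set Z : Set ℝ := Icc y₀ ybar ∩ A ⁻¹' {0} with hZ
    have hZne : Z.Nonempty := ⟨ybar, ⟨hy₀.2.le, le_rfl⟩, by simpa using hterm⟩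
    have hsub : Icc y₀ ybar ⊆ Icc (0:ℝ) ybar := Icc_subset_Icc hy₀.1 le_rfl
    have hZcl : IsClosed Z :=
      (hcont.mono hsub).preimage_isClosed_of_isClosed isClosed_Icc isClosed_singleton
    have hZbdd : BddBelow Z := ⟨y₀, fun z hz => hz.1.1⟩
    set y₁ := sInf Z with hy₁
    have hy₁Z : y₁ ∈ Z := hZcl.csInf_mem hZne hZbdd
    have hAy₁ : A y₁ = 0 := hy₁Z.2
    have hy₀y₁ : y₀ < y₁ := by
      rcases lt_or_eq_of_le hy₁Z.1.1 with h | h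
      · exact h
      · exact absurd (h ▸ hAy₁) (ne_of_lt hA0)
    -- A < 0 on [y₀, y₁)
    have hneg : ∀ y, y₀ ≤ y → y < y₁ → A y < 0 := by
      intro y hyl hyu
      by_contra hge
      push_neg at hge
      have hyle : y ≤ ybar := le_trans hyu.le hy₁Z.1.2
      have hc : ContinuousOn A (Icc y₀ y) :=
        hcont.mono fun z hz => ⟨le_trans hy₀.1 hz.1, le_trans hz.2 hyle⟩
      obtain ⟨z, hzmem, hz0⟩ := intermediate_value_Icc hyl hc (by
        constructor <;> [exact hA0.le; exact hge] : (0:ℝ) ∈ Icc (A y₀) (A y))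
      have hzZ : z ∈ Z := ⟨⟨hzmem.1, le_trans hzmem.2 hyle⟩, by simpa using hz0⟩
      have : y₁ ≤ z := csInf_le hZbdd hzZ
      linarith [hzmem.2]
    -- derivative at y₁ is negative, contradiction with A < 0 to the left
    have hy₁Icc : y₁ ∈ Icc (0:ℝ) ybar := hsub hy₁Z.1
    have hder := hzero y₁ hy₁Icc hAy₁
    have hslope : Tendsto (slope A y₁) (𝓝[≠] y₁) (𝓝 (-(1 / ((ρ + κ) * deriv ψ (Ft y₁))))) :=
      hasDerivAt_iff_tendsto_slope.mp hder
    have hev : ∀ᶠ y in 𝓝[≠] y₁, slope A y₁ y < 0 :=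
      hslope.eventually_lt_const (by linarith [hDpos y₁])
    have hev' : ∀ᶠ y in 𝓝[<] y₁, slope A y₁ y < 0 :=
      hev.filter_mono (nhdsWithin_mono _ fun z hz => ne_of_lt hz)
    have hmem : Ioo y₀ y₁ ∈ 𝓝[<] y₁ := Ioo_mem_nhdsLT_of_mem ⟨hy₀y₁, le_rfl⟩
    obtain ⟨y, hy1, hy2⟩ := (hev'.and (eventually_of_mem hmem fun z hz => hz)).exists
    have hAy : A y < 0 := hneg y hy2.1.le hy2.2
    have hsl : 0 < slope A y₁ y := by
      rw [slope_def_field]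
      rw [hAy₁]
      have : y - y₁ < 0 := by linarith [hy2.2]
      rw [div_pos_iff]
      right
      constructor <;> [linarith; linarith]
    linarith
  -- helper: A cannot vanish on [0, ybar)
  have h2 : ∀ y₀ ∈ Ico (0:ℝ) ybar, A y₀ = 0 → False := by
    intro y₀ hy₀ hA0
    have hder := hzero y₀ ⟨hy₀.1, hy₀.2.le⟩ hA0
    have hslope : Tendsto (slope A y₀) (𝓝[≠] y₀) (𝓝 (-(1 / ((ρ + κ) * deriv ψ (Ft y₀))))) :=
      hasDerivAt_iff_tendsto_slope.mp hder
    have hev : ∀ᶠ y in 𝓝[≠] y₀, slope A y₀ y < 0 :=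
      hslope.eventually_lt_const (by linarith [hDpos y₀])
    have hev' : ∀ᶠ y in 𝓝[>] y₀, slope A y₀ y < 0 :=
      hev.filter_mono (nhdsWithin_mono _ fun z hz => ne_of_gt hz)
    have hmem : Ioo y₀ ybar ∈ 𝓝[>] y₀ := Ioo_mem_nhdsGT_of_mem ⟨le_rfl, hy₀.2⟩
    obtain ⟨y, hy1, hy2⟩ := (hev'.and (eventually_of_mem hmem fun z hz => hz)).exists
    have hAy : A y < 0 := by
      rw [slope_def_field, hA0] at hy1
      have hd : 0 < y - y₀ := by linarith [hy2.1]
      have := (div_neg_iff).mp (by simpa using hy1)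
      rcases this with ⟨h, h'⟩ | ⟨h, h'⟩
      · linarith
      · linarith
    exact h1 y ⟨le_trans hy₀.1 hy2.1.le, hy2.2⟩ hAy
  -- conclude
  intro y hy
  have hApos : 0 < A y := by
    rcases lt_trichotomy (A y) 0 with h | h | h
    · exact absurd (h1 y hy h) (by simp)
    · exact absurd (h2 y hy h) (by simp)
    · exact h
  refine ⟨hApos, ?_⟩
  have hder := hODE y ⟨hy.1, hy.2.le⟩
  rw [hder.deriv]
  have h2' := hψ'' (Ft y)
  have h1' := hψ' (Ft y)
  have : 0 < iteratedDeriv 2 ψ (Ft y) / deriv ψ (Ft y) := div_pos h2' h1'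
  nlinarith [hDpos y, mul_pos (mul_pos hβ this) hApos]
end

section
/- For (x,y) in the region I₂ = {(x,y) : x ≥ x̄, 0 ≤ y < ȳ} with x̄ = F(ȳ) ≥ cρ + κβȳ/(ρ+κ), the function w(x,y) = R(x,ȳ) − c(ȳ−y) satisfies (σ²/2)w_xx + κ((μ−βy)−x)w_x − ρw + xy = (ȳ−y)(κβȳ/(ρ+κ) + cρ − x) ≤ 0. -/
/-!
On `I₂` the function `w(·, y)` is affine in `x` with slope `R_x(x, ȳ) = ȳ / (ρ + κ)`, so the
diffusion term vanishes and the left-hand side is an explicit polynomial in `x`, `y`, `ȳ`, which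
factors as stated. The sign then comes from `ȳ - y > 0` and `x ≥ x̄ ≥ cρ + κβȳ/(ρ+κ)`.
-/

lemma deriv_affine (a b : ℝ) : deriv (fun t : ℝ => a * t + b) = fun _ => a := by
  funext t
  simp

lemma iteratedDeriv_two_affine (a b t : ℝ) : iteratedDeriv 2 (fun t : ℝ => a * t + b) t = 0 := by
  simp [iteratedDeriv_succ]

theorem stmt16_general (κ σ ρ μ β c ybar xbar : ℝ) (hκ : 0 < κ) (hρ : 0 < ρ)
    (hxbar : c * ρ + κ * β * ybar / (ρ + κ) ≤ xbar)
    (R : ℝ → ℝ → ℝ)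
    (hR : ∀ x y : ℝ, R x y =
      x * y / (ρ + κ) + μ * κ * y / (ρ * (ρ + κ)) - κ * β * y ^ 2 / (ρ * (ρ + κ)))
    (x y : ℝ) (hx : xbar ≤ x) (hy : y < ybar)
    (w : ℝ → ℝ → ℝ) (hw : ∀ x' y' : ℝ, w x' y' = R x' ybar - c * (ybar - y')) :
    σ ^ 2 / 2 * iteratedDeriv 2 (fun x' => w x' y) x
        + κ * ((μ - β * y) - x) * deriv (fun x' => w x' y) x
        - ρ * w x y + x * y
      = (ybar - y) * (κ * β * ybar / (ρ + κ) + c * ρ - x) ∧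
      (ybar - y) * (κ * β * ybar / (ρ + κ) + c * ρ - x) ≤ 0 := by
  have hw_affine : (fun x' => w x' y) = fun x' => ybar / (ρ + κ) * x' +
      (μ * κ * ybar / (ρ * (ρ + κ)) - κ * β * ybar ^ 2 / (ρ * (ρ + κ)) - c * (ybar - y)) := by
    funext x'
    rw [hw, hR]
    ring
  refine ⟨?_, mul_nonpos_of_nonneg_of_nonpos (by linarith) (by linarith)⟩
  rw [hw_affine, iteratedDeriv_two_affine, deriv_affine, hw, hR]
  field_simp
  ring

/-- In the region `I₂ = {x ≥ x̄, 0 ≤ y < ybar}` the function `w(x,y) = R(x,ybar) − c(ybar−y)`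
satisfies `(σ²/2)w_xx + κ((μ−βy)−x)w_x − ρw + xy = (ybar−y)(κβ·ybar/(ρ+κ) + cρ − x) ≤ 0`. -/
theorem stmt16 (κ σ ρ μ β c ybar xbar : ℝ) (hκ : 0 < κ) (hσ : 0 < σ) (hρ : 0 < ρ)
    (hβ : 0 < β) (hc : 0 ≤ c)
    (hxbar : c * ρ + κ * β * ybar / (ρ + κ) ≤ xbar)
    (R : ℝ → ℝ → ℝ)
    (hR : ∀ x y : ℝ, R x y =
      x * y / (ρ + κ) + μ * κ * y / (ρ * (ρ + κ)) - κ * β * y ^ 2 / (ρ * (ρ + κ)))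
    (x y : ℝ) (hx : xbar ≤ x) (hy0 : 0 ≤ y) (hy : y < ybar)
    (w : ℝ → ℝ → ℝ) (hw : ∀ x' y' : ℝ, w x' y' = R x' ybar - c * (ybar - y')) :
    σ ^ 2 / 2 * iteratedDeriv 2 (fun x' => w x' y) x
        + κ * ((μ - β * y) - x) * deriv (fun x' => w x' y) x
        - ρ * w x y + x * y
      = (ybar - y) * (κ * β * ybar / (ρ + κ) + c * ρ - x) ∧
      (ybar - y) * (κ * β * ybar / (ρ + κ) + c * ρ - x) ≤ 0 :=
  stmt16_general κ σ ρ μ β c ybar xbar hκ hρ hxbar R hR x y hx hy w hw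
end

section
/- Suppose F⁻¹ : ℝ → [0,ȳ] is globally Lipschitz and for fixed ω two pairs (X̃,K̃), (X̂,K̂) solve the reflected system X_t = x + ∫₀^t κ((μ−β(y+Δ+K_s)) − X_s)ds + σW_t(ω), K_t = min{sup_{0≤s≤t}(F⁻¹(X_s) − (ȳ−(y+Δ)))⁺, ȳ−(y+Δ)}. Then X̃ = X̂ and K̃ = K̂ on [0,∞) (pathwise uniqueness). -/
/-!
The map `X ↦ K` is Lipschitz for the running-supremum norm: truncation by `(·)⁺` and by
`min · c` are 1-Lipschitz, and a supremum moves by at most the uniform distance of its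
arguments, so `|K₁ t - K₂ t| ≤ K̄ sup_{[0,t]} |X₁ - X₂|`. Subtracting the integral equations,
the running supremum `g` of `|X₁ - X₂|` then satisfies `g t ≤ C ∫₀ᵗ g`, and iterating this
inequality gives `g t ≤ g T (C t)ⁿ / n!` on `[0, T]`, hence `g = 0`.
-/

open Set MeasureTheory Filter
open scoped Nat

theorem Continuous.bddAbove_image_Icc {α : Type*} [LinearOrder α] [TopologicalSpace α]
    [ClosedIciTopology α] [Nonempty α] {f : ℝ → α} (hf : Continuous f) (a b : ℝ) :
    BddAbove (f '' Icc a b) :=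
  isCompact_Icc.bddAbove_image hf.continuousOn

noncomputable def runningSup (f : ℝ → ℝ) (t : ℝ) : ℝ := sSup (f '' Icc 0 t)

section RunningSup

variable {f g : ℝ → ℝ} {s t M : ℝ}

theorem le_runningSup (hf : BddAbove (f '' Icc 0 t)) (hs : s ∈ Icc 0 t) :
    f s ≤ runningSup f t :=
  le_csSup hf (mem_image_of_mem f hs)

theorem runningSup_le (ht : 0 ≤ t) (h : ∀ s ∈ Icc 0 t, f s ≤ M) : runningSup f t ≤ M :=
  csSup_le ((nonempty_Icc.2 ht).image f) (forall_mem_image.2 h)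

theorem runningSup_nonneg (hf : ∀ s ∈ Icc 0 t, 0 ≤ f s) : 0 ≤ runningSup f t :=
  Real.sSup_nonneg (forall_mem_image.2 hf)

theorem monotoneOn_runningSup (hf : ∀ t, BddAbove (f '' Icc 0 t)) :
    MonotoneOn (runningSup f) (Ici 0) := fun _ hs t _ hst =>
  csSup_le_csSup (hf t) ((nonempty_Icc.2 hs).image f) (image_mono (Icc_subset_Icc_right hst))

theorem intervalIntegrable_runningSup (hf : ∀ t, BddAbove (f '' Icc 0 t)) (ht : 0 ≤ t) :
    IntervalIntegrable (runningSup f) volume 0 t :=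
  ((monotoneOn_runningSup hf).mono
    (by simp [uIcc_of_le ht, Icc_subset_Ici_self])).intervalIntegrable

theorem abs_runningSup_sub_runningSup_le (hf : BddAbove (f '' Icc 0 t))
    (hg : BddAbove (g '' Icc 0 t)) (ht : 0 ≤ t) (h : ∀ s ∈ Icc 0 t, |f s - g s| ≤ M) :
    |runningSup f t - runningSup g t| ≤ M := by
  rw [abs_sub_le_iff, sub_le_iff_le_add, sub_le_iff_le_add]
  constructor
  · refine runningSup_le ht fun s hs => ?_
    linarith [(abs_le.1 (h s hs)).2, le_runningSup hg hs]
  · refine runningSup_le ht fun s hs => ?_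
    linarith [(abs_le.1 (h s hs)).1, le_runningSup hf hs]

end RunningSup

section Gronwall

variable {g : ℝ → ℝ} {C M T : ℝ}

theorem le_mul_pow_div_factorial_of_le_mul_integral (hC : 0 ≤ C)
    (hgi : IntervalIntegrable g volume 0 T) (hM : ∀ s ∈ Icc 0 T, g s ≤ M)
    (hg : ∀ s ∈ Icc 0 T, g s ≤ C * ∫ u in 0..s, g u) (n : ℕ) :
    ∀ s ∈ Icc 0 T, g s ≤ M * (C * s) ^ n / n ! := by
  induction n with
  | zero => simpa using hM
  | succ n ih =>
    intro s hs
    have hsub : uIcc 0 s ⊆ uIcc 0 T := by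
      simpa [uIcc_of_le hs.1, uIcc_of_le (hs.1.trans hs.2)] using Icc_subset_Icc_right hs.2
    calc g s ≤ C * ∫ u in 0..s, g u := hg s hs
      _ ≤ C * ∫ u in 0..s, M * C ^ n / n ! * u ^ n := by
        gcongr
        refine intervalIntegral.integral_mono_on hs.1 (hgi.mono_set hsub)
          (Continuous.intervalIntegrable (by fun_prop) _ _) fun u hu => ?_
        simpa [mul_pow, mul_div_right_comm, mul_assoc] using ih u ⟨hu.1, hu.2.trans hs.2⟩
      _ = M * (C * s) ^ (n + 1) / (n + 1)! := by
        rw [intervalIntegral.integral_const_mul, integral_pow, Nat.factorial_succ]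
        push_cast
        field_simp
        ring

theorem nonpos_of_le_mul_integral (hC : 0 ≤ C) (hgi : IntervalIntegrable g volume 0 T)
    (hM : ∀ s ∈ Icc 0 T, g s ≤ M) (hg : ∀ s ∈ Icc 0 T, g s ≤ C * ∫ u in 0..s, g u) :
    ∀ s ∈ Icc 0 T, g s ≤ 0 := fun s hs => by
  have hlim : Tendsto (fun n : ℕ => M * (C * s) ^ n / n !) atTop (nhds 0) := by
    simpa [mul_div_assoc] using (FloorSemiring.tendsto_pow_div_factorial_atTop (C * s)).const_mul M
  exact ge_of_tendsto' hlim fun n => le_mul_pow_div_factorial_of_le_mul_integral hC hgi hM hg n s hs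

end Gronwall

section CappedExcess

noncomputable def cappedExcess (F : ℝ → ℝ) (c : ℝ) (X : ℝ → ℝ) (t : ℝ) : ℝ :=
  min (runningSup (fun s => max (F (X s) - c) 0) t) c

variable {F X X₁ X₂ K : ℝ → ℝ} {c t : ℝ} {L : NNReal}

theorem monotoneOn_cappedExcess (hF : Continuous F) (hX : Continuous X) :
    MonotoneOn (cappedExcess F c X) (Ici 0) := fun _ hs _ ht hst =>
  min_le_min_right c
    (monotoneOn_runningSup (fun _ => Continuous.bddAbove_image_Icc (by fun_prop) _ _) hs ht hst)

theorem intervalIntegrable_of_eq_cappedExcess (hF : Continuous F) (hX : Continuous X)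
    (hK : ∀ s ≥ 0, K s = cappedExcess F c X s) (ht : 0 ≤ t) :
    IntervalIntegrable K volume 0 t := by
  have hmono : MonotoneOn K (uIcc 0 t) := fun a ha b hb hab => by
    rw [uIcc_of_le ht] at ha hb
    rw [hK a ha.1, hK b hb.1]
    exact monotoneOn_cappedExcess hF hX ha.1 hb.1 hab
  exact hmono.intervalIntegrable

theorem abs_cappedExcess_sub_le (hF : LipschitzWith L F) (hX₁ : Continuous X₁)
    (hX₂ : Continuous X₂) (ht : 0 ≤ t) :
    |cappedExcess F c X₁ t - cappedExcess F c X₂ t| ≤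
      L * runningSup (fun s => |X₁ s - X₂ s|) t := by
  have hFc := hF.continuous
  unfold cappedExcess
  refine (abs_min_sub_min_le_max _ _ _ _).trans ?_
  rw [sub_self, abs_zero, max_eq_left (abs_nonneg _)]
  refine abs_runningSup_sub_runningSup_le ?_ ?_ ht fun s hs => ?_
  · exact Continuous.bddAbove_image_Icc (by fun_prop) _ _
  · exact Continuous.bddAbove_image_Icc (by fun_prop) _ _
  calc |max (F (X₁ s) - c) 0 - max (F (X₂ s) - c) 0| ≤ |F (X₁ s) - F (X₂ s)| := by
        simpa using abs_max_sub_max_le_abs (F (X₁ s) - c) (F (X₂ s) - c) 0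
    _ ≤ L * |X₁ s - X₂ s| := by simpa [Real.dist_eq] using hF.dist_le_mul (X₁ s) (X₂ s)
    _ ≤ L * runningSup (fun s => |X₁ s - X₂ s|) t := by
        gcongr
        exact le_runningSup (f := fun s => |X₁ s - X₂ s|)
          (Continuous.bddAbove_image_Icc (by fun_prop) _ _) hs

end CappedExcess

section ReflectedSystem

variable {κ μ β a x σ : ℝ} {w X₁ X₂ K₁ K₂ : ℝ → ℝ} {t : ℝ}

theorem abs_drift_sub_drift_le (k₁ k₂ x₁ x₂ : ℝ) :
    |κ * ((μ - β * (a + k₁)) - x₁) - κ * ((μ - β * (a + k₂)) - x₂)| ≤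
      |κ * β| * |k₁ - k₂| + |κ| * |x₁ - x₂| := by
  calc _ = |-(κ * β) * (k₁ - k₂) + -κ * (x₁ - x₂)| := by ring_nf
    _ ≤ _ := by
      simpa only [abs_mul, abs_neg] using abs_add_le (-(κ * β) * (k₁ - k₂)) (-κ * (x₁ - x₂))

theorem abs_sub_le_mul_integral_runningSup {L : ℝ} (ht : 0 ≤ t)
    (hX₁c : Continuous X₁) (hX₂c : Continuous X₂)
    (hK₁i : IntervalIntegrable K₁ volume 0 t) (hK₂i : IntervalIntegrable K₂ volume 0 t)
    (hK : ∀ s ∈ Icc 0 t, |K₁ s - K₂ s| ≤ L * runningSup (fun u => |X₁ u - X₂ u|) s)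
    (hX₁ : X₁ t = x + (∫ s in 0..t, κ * ((μ - β * (a + K₁ s)) - X₁ s)) + σ * w t)
    (hX₂ : X₂ t = x + (∫ s in 0..t, κ * ((μ - β * (a + K₂ s)) - X₂ s)) + σ * w t) :
    |X₁ t - X₂ t| ≤ (|κ * β| * L + |κ|) * ∫ s in 0..t, runningSup (fun u => |X₁ u - X₂ u|) s := by
  set g := runningSup fun u => |X₁ u - X₂ u|
  have hgb : ∀ t, BddAbove ((fun u => |X₁ u - X₂ u|) '' Icc 0 t) := fun _ =>
    Continuous.bddAbove_image_Icc (by fun_prop) _ _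
  have hdrift : ∀ {X K : ℝ → ℝ}, Continuous X → IntervalIntegrable K volume 0 t →
      IntervalIntegrable (fun s => κ * ((μ - β * (a + K s)) - X s)) volume 0 t :=
    fun hX hK => ((intervalIntegrable_const.sub ((intervalIntegrable_const.add hK).const_mul β)).sub
      (hX.intervalIntegrable 0 t)).const_mul κ
  rw [hX₁, hX₂, add_sub_add_right_eq_sub, add_sub_add_left_eq_sub,
    ← intervalIntegral.integral_sub (hdrift hX₁c hK₁i) (hdrift hX₂c hK₂i),
    ← intervalIntegral.integral_const_mul]
  refine (intervalIntegral.abs_integral_le_integral_abs ht).trans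
    (intervalIntegral.integral_mono_on ht ((hdrift hX₁c hK₁i).sub (hdrift hX₂c hK₂i)).abs
      ((intervalIntegrable_runningSup hgb ht).const_mul _) fun s hs => ?_)
  calc _ ≤ |κ * β| * |K₁ s - K₂ s| + |κ| * |X₁ s - X₂ s| := abs_drift_sub_drift_le _ _ _ _
    _ ≤ |κ * β| * (L * g s) + |κ| * g s := by
        gcongr
        exacts [hK s hs, le_runningSup (hgb s) ⟨hs.1, le_rfl⟩]
    _ = _ := by ring

end ReflectedSystem

theorem stmt17_general (κ σ μ β x y Δ ybar : ℝ)
    (Finv : ℝ → ℝ) (Kbar : NNReal) (hLip : LipschitzWith Kbar Finv)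
    (w : ℝ → ℝ)
    (X₁ K₁ X₂ K₂ : ℝ → ℝ) (hX₁c : Continuous X₁) (hX₂c : Continuous X₂)
    (hX₁ : ∀ t ≥ (0 : ℝ),
      X₁ t = x + (∫ s in (0 : ℝ)..t, κ * ((μ - β * (y + Δ + K₁ s)) - X₁ s)) + σ * w t)
    (hK₁ : ∀ t ≥ (0 : ℝ),
      K₁ t = min (sSup ((fun s => max (Finv (X₁ s) - (ybar - (y + Δ))) 0) '' Icc 0 t))
        (ybar - (y + Δ)))
    (hX₂ : ∀ t ≥ (0 : ℝ),
      X₂ t = x + (∫ s in (0 : ℝ)..t, κ * ((μ - β * (y + Δ + K₂ s)) - X₂ s)) + σ * w t)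
    (hK₂ : ∀ t ≥ (0 : ℝ),
      K₂ t = min (sSup ((fun s => max (Finv (X₂ s) - (ybar - (y + Δ))) 0) '' Icc 0 t))
        (ybar - (y + Δ))) :
    ∀ t ≥ (0 : ℝ), X₁ t = X₂ t ∧ K₁ t = K₂ t := by
  intro T hT
  set g := runningSup fun u => |X₁ u - X₂ u|
  have hF := hLip.continuous
  have hgb : ∀ t, BddAbove ((fun u => |X₁ u - X₂ u|) '' Icc 0 t) := fun _ =>
    Continuous.bddAbove_image_Icc (by fun_prop) _ _
  have hK : ∀ s ≥ 0, |K₁ s - K₂ s| ≤ Kbar * g s := fun s hs => by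
    rw [hK₁ s hs, hK₂ s hs]
    exact abs_cappedExcess_sub_le hLip hX₁c hX₂c hs
  set C := |κ * β| * Kbar + |κ|
  have hX : ∀ s ≥ 0, |X₁ s - X₂ s| ≤ C * ∫ u in 0..s, g u := fun s hs =>
    abs_sub_le_mul_integral_runningSup hs hX₁c hX₂c
      (intervalIntegrable_of_eq_cappedExcess hF hX₁c hK₁ hs)
      (intervalIntegrable_of_eq_cappedExcess hF hX₂c hK₂ hs)
      (fun u hu => hK u hu.1) (hX₁ s hs) (hX₂ s hs)
  have hg : ∀ s ∈ Icc 0 T, g s ≤ C * ∫ u in 0..s, g u := fun s hs =>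
    runningSup_le hs.1 fun v hv => (hX v hv.1).trans <| by
      gcongr
      exact intervalIntegral.integral_mono_interval le_rfl hv.1 hv.2
        (ae_of_all _ fun _ => runningSup_nonneg fun _ _ => abs_nonneg _)
        (intervalIntegrable_runningSup hgb hs.1)
  have hgT : g T ≤ 0 := nonpos_of_le_mul_integral (by positivity)
    (intervalIntegrable_runningSup hgb hT)
    (fun s hs => monotoneOn_runningSup hgb hs.1 hT hs.2) hg T ⟨hT, le_rfl⟩
  have hXT : |X₁ T - X₂ T| ≤ 0 := (le_runningSup (hgb T) ⟨hT, le_rfl⟩).trans hgT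
  have hKT : |K₁ T - K₂ T| ≤ 0 :=
    (hK T hT).trans (mul_nonpos_of_nonneg_of_nonpos Kbar.2 hgT)
  exact ⟨sub_eq_zero.1 (abs_nonpos_iff.1 hXT), sub_eq_zero.1 (abs_nonpos_iff.1 hKT)⟩

/-- Pathwise uniqueness for the reflected system: with a globally Lipschitz `F⁻¹` and a
fixed continuous driving path `w`, two solutions of
`X_t = x + ∫₀^t κ((μ−β(y+Δ+K_s)) − X_s)ds + σ w_t`,
`K_t = min{sup_{0≤s≤t}(F⁻¹(X_s) − (ybar−(y+Δ)))⁺, ybar−(y+Δ)}` coincide. -/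
theorem stmt17 (κ σ μ β x y Δ ybar : ℝ) (hκ : 0 < κ) (hσ : 0 < σ) (hβ : 0 < β)
    (h0 : 0 ≤ y + Δ) (h1 : y + Δ ≤ ybar)
    (Finv : ℝ → ℝ) (Kbar : NNReal) (hLip : LipschitzWith Kbar Finv)
    (hrange : ∀ z, Finv z ∈ Icc (0 : ℝ) ybar)
    (w : ℝ → ℝ) (hw : Continuous w)
    (X₁ K₁ X₂ K₂ : ℝ → ℝ) (hX₁c : Continuous X₁) (hX₂c : Continuous X₂)
    (hX₁ : ∀ t ≥ (0 : ℝ),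
      X₁ t = x + (∫ s in (0 : ℝ)..t, κ * ((μ - β * (y + Δ + K₁ s)) - X₁ s)) + σ * w t)
    (hK₁ : ∀ t ≥ (0 : ℝ),
      K₁ t = min (sSup ((fun s => max (Finv (X₁ s) - (ybar - (y + Δ))) 0) '' Icc 0 t))
        (ybar - (y + Δ)))
    (hX₂ : ∀ t ≥ (0 : ℝ),
      X₂ t = x + (∫ s in (0 : ℝ)..t, κ * ((μ - β * (y + Δ + K₂ s)) - X₂ s)) + σ * w t)
    (hK₂ : ∀ t ≥ (0 : ℝ),
      K₂ t = min (sSup ((fun s => max (Finv (X₂ s) - (ybar - (y + Δ))) 0) '' Icc 0 t))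
        (ybar - (y + Δ))) :
    ∀ t ≥ (0 : ℝ), X₁ t = X₂ t ∧ K₁ t = K₂ t :=
  stmt17_general κ σ μ β x y Δ ybar Finv Kbar hLip w X₁ K₁ X₂ K₂ hX₁c hX₂c hX₁ hK₁ hX₂ hK₂
end

section
/- Let x̃(ȳ) denote the unique solution of ψ'(x)(c − R̃(x,ȳ)) + (ρ+κ)^{−1}ψ(x) = 0 as a function of ȳ > 0, where R̃(x,y) = (μκ + ρx − β(ρ+2κ)y)/(ρ(ρ+κ)). If c − R̃(x̃(ȳ),ȳ) < 0, then x̃ is differentiable and strictly increasing in ȳ, with x̃'(ȳ) = −β(ρ+2κ)ψ'(x̃)/(ρ(ρ+κ)ψ''(x̃)(c−R̃(x̃,ȳ))) > 0. -/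
/-!
With `a = ρ/κ` and `l = √(2κ)/σ`, the Gaussian factors in `psi` cancel and
`ψ(x) = Γ(a)⁻¹ ∫₀^∞ t^(a-1) e^(-t²/2 + l(x-μ)t) dt`. Differentiating under the integral sign
raises the exponent of `t`, so `ψ'` and `ψ''` are again such integrals: positive and continuous.

Since `R̃` is affine in `ȳ`, `H(x, ȳ) = H(x, 0) + ȳ β(ρ+2κ)ψ'(x)/(ρ(ρ+κ))` with a positive
coefficient, so `H(x, ȳ) = 0` is equivalent to `ȳ = Y(x)` for an explicit `C¹` function `Y`, and
by uniqueness `x̃` inverts `Y` near every `ȳ > 0`. At `x = x̃(ȳ)` one finds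
`Y'(x) = -ψ''(x)(c - R̃(x, ȳ)) / (∂H/∂ȳ)`, which is positive when `c - R̃ < 0`; the inverse
function theorem then gives `x̃' = 1/Y'`, and positivity of `x̃'` gives strict monotonicity.
-/

open Set

open MeasureTheory Topology

/-- `∫₀^∞ t^(a-1) e^(-t²/2 + s t) dt`, so that
`Dcyl (-a) (-s) = e^(-s²/4) gaussMellin a s / Γ(a)`. -/
noncomputable def gaussMellin (a s : ℝ) : ℝ :=
  ∫ t in Ioi (0 : ℝ), t ^ (a - 1) * Real.exp (-t ^ 2 / 2 + s * t)

section GaussMellin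

variable {a : ℝ}

lemma integrableOn_gaussMellin (ha : 0 < a) (s : ℝ) :
    IntegrableOn (fun t : ℝ => t ^ (a - 1) * Real.exp (-t ^ 2 / 2 + s * t)) (Ioi 0) := by
  refine ((Real.GammaIntegral_convergent ha).const_mul (Real.exp ((s + 1) ^ 2 / 2))).mono'
    (by fun_prop) ?_
  filter_upwards [ae_restrict_mem measurableSet_Ioi] with t (ht : 0 < t)
  rw [Real.norm_of_nonneg (by positivity)]
  calc t ^ (a - 1) * Real.exp (-t ^ 2 / 2 + s * t)
      ≤ t ^ (a - 1) * Real.exp ((s + 1) ^ 2 / 2 + -t) := by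
        gcongr t ^ (a - 1) * Real.exp ?_; nlinarith [sq_nonneg (s + 1 - t)]
    _ = _ := by rw [Real.exp_add]; ring

lemma gaussMellin_pos (ha : 0 < a) (s : ℝ) : 0 < gaussMellin a s := by
  have hpos : ∀ t ∈ Ioi (0 : ℝ), 0 < t ^ (a - 1) * Real.exp (-t ^ 2 / 2 + s * t) :=
    fun t ht => mul_pos (Real.rpow_pos_of_pos ht _) (Real.exp_pos _)
  rw [gaussMellin, setIntegral_pos_iff_support_of_nonneg_ae
    ((ae_restrict_iff' measurableSet_Ioi).2 (.of_forall fun t ht => (hpos t ht).le))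
    (integrableOn_gaussMellin ha s)]
  calc (0 : ENNReal) < volume (Ioi (0 : ℝ)) := by simp
    _ ≤ _ := measure_mono fun t ht => by exact ⟨(hpos t ht).ne', ht⟩

lemma hasDerivAt_gaussMellin (ha : 0 < a) (s₀ : ℝ) :
    HasDerivAt (gaussMellin a) (gaussMellin (a + 1) s₀) s₀ := by
  have ha1 : 0 < a + 1 := by linarith
  refine (hasDerivAt_integral_of_dominated_loc_of_deriv_le (Metric.ball_mem_nhds s₀ one_pos)
    (F' := fun s t => t ^ (a + 1 - 1) * Real.exp (-t ^ 2 / 2 + s * t))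
    (.of_forall fun s => (integrableOn_gaussMellin ha s).aestronglyMeasurable)
    (integrableOn_gaussMellin ha s₀) (integrableOn_gaussMellin ha1 s₀).aestronglyMeasurable ?_
    (integrableOn_gaussMellin ha1 (s₀ + 1)) ?_).2
  all_goals filter_upwards [ae_restrict_mem measurableSet_Ioi] with t (ht : 0 < t) s hs
  · have hs' : s ≤ s₀ + 1 := by
      linarith [(abs_lt.1 (Metric.mem_ball.1 hs : |s - s₀| < 1)).2]
    rw [Real.norm_of_nonneg (by positivity)]
    gcongr
  · have h := (((hasDerivAt_id s).mul_const t).const_add (-t ^ 2 / 2)).exp.const_mul (t ^ (a - 1))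
    refine h.congr_deriv ?_
    have hpow : t ^ a = t ^ (a - 1) * t := by rw [← Real.rpow_add_one ht.ne', sub_add_cancel]
    rw [id, add_sub_cancel_right, hpow]
    ring

lemma hasStrictDerivAt_gaussMellin (ha : 0 < a) (s : ℝ) :
    HasStrictDerivAt (gaussMellin a) (gaussMellin (a + 1) s) s :=
  hasStrictDerivAt_of_hasDerivAt_of_continuousAt (.of_forall (hasDerivAt_gaussMellin ha))
    (hasDerivAt_gaussMellin (by linarith) s).continuousAt

lemma hasStrictDerivAt_const_mul_gaussMellin_affine (ha : 0 < a) (C l m x : ℝ) :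
    HasStrictDerivAt (fun x => C * gaussMellin a (l * (x - m)))
      (C * l * gaussMellin (a + 1) (l * (x - m))) x := by
  have hinner := HasStrictDerivAt.const_mul l ((hasStrictDerivAt_id x).sub_const m)
  refine (((hasStrictDerivAt_gaussMellin ha _).comp x hinner).const_mul C).congr_deriv ?_
  simp only [id]
  ring

end GaussMellin

section Psi

variable {κ μ σ ρ : ℝ}

lemma psi_eq_gaussMellin (hκ : 0 ≤ κ) (hσ : σ ≠ 0) :
    psi κ μ σ ρ = fun x =>
      (Real.Gamma (ρ / κ))⁻¹ * gaussMellin (ρ / κ) (√(2 * κ) / σ * (x - μ)) := by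
  funext x
  have hsq : √(2 * κ) ^ 2 = 2 * κ := Real.sq_sqrt (by positivity)
  -- the Gaussian prefactor of `psi` cancels the one in `Dcyl`
  have hcancel : Real.exp (κ * (x - μ) ^ 2 / (2 * σ ^ 2)) *
      Real.exp (-(-((x - μ) / σ) * √(2 * κ)) ^ 2 / 4) = 1 := by
    rw [← Real.exp_add, Real.exp_eq_one_iff, mul_pow, hsq]
    field_simp
    ring
  have hintegrand : ∀ t : ℝ, -t ^ 2 / 2 - -((x - μ) / σ) * √(2 * κ) * t =
      -t ^ 2 / 2 + √(2 * κ) / σ * (x - μ) * t := fun t => by field_simp; ring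
  simp only [psi, Dcyl, neg_neg, gaussMellin, hintegrand]
  linear_combination (Real.Gamma (ρ / κ))⁻¹ * (∫ t in Ioi (0 : ℝ),
    t ^ (ρ / κ - 1) * Real.exp (-t ^ 2 / 2 + √(2 * κ) / σ * (x - μ) * t)) * hcancel

lemma deriv_psi (hκ : 0 < κ) (hσ : σ ≠ 0) (hρ : 0 < ρ) :
    deriv (psi κ μ σ ρ) = fun x => (Real.Gamma (ρ / κ))⁻¹ * (√(2 * κ) / σ) *
      gaussMellin (ρ / κ + 1) (√(2 * κ) / σ * (x - μ)) := by
  funext x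
  rw [psi_eq_gaussMellin hκ.le hσ]
  exact (hasStrictDerivAt_const_mul_gaussMellin_affine (by positivity) _ _ _ x).hasDerivAt.deriv

lemma iteratedDeriv_two_psi (hκ : 0 < κ) (hσ : σ ≠ 0) (hρ : 0 < ρ) :
    iteratedDeriv 2 (psi κ μ σ ρ) = fun x => (Real.Gamma (ρ / κ))⁻¹ * (√(2 * κ) / σ) *
      (√(2 * κ) / σ) * gaussMellin (ρ / κ + 1 + 1) (√(2 * κ) / σ * (x - μ)) := by
  funext x
  rw [iteratedDeriv_succ, iteratedDeriv_one, deriv_psi hκ hσ hρ]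
  exact (hasStrictDerivAt_const_mul_gaussMellin_affine (by positivity) _ _ _ x).hasDerivAt.deriv

lemma hasStrictDerivAt_psi (hκ : 0 < κ) (hσ : σ ≠ 0) (hρ : 0 < ρ) (x : ℝ) :
    HasStrictDerivAt (psi κ μ σ ρ) (deriv (psi κ μ σ ρ) x) x := by
  rw [deriv_psi hκ hσ hρ, psi_eq_gaussMellin hκ.le hσ]
  exact hasStrictDerivAt_const_mul_gaussMellin_affine (by positivity) _ _ _ x

lemma hasStrictDerivAt_deriv_psi (hκ : 0 < κ) (hσ : σ ≠ 0) (hρ : 0 < ρ) (x : ℝ) :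
    HasStrictDerivAt (deriv (psi κ μ σ ρ)) (iteratedDeriv 2 (psi κ μ σ ρ) x) x := by
  rw [iteratedDeriv_two_psi hκ hσ hρ, deriv_psi hκ hσ hρ]
  exact hasStrictDerivAt_const_mul_gaussMellin_affine (by positivity) _ _ _ x

lemma deriv_psi_pos (hκ : 0 < κ) (hσ : 0 < σ) (hρ : 0 < ρ) (x : ℝ) :
    0 < deriv (psi κ μ σ ρ) x := by
  have hΓ := Real.Gamma_pos_of_pos (div_pos hρ hκ)
  have hF := gaussMellin_pos (a := ρ / κ + 1) (by positivity) (√(2 * κ) / σ * (x - μ))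
  rw [deriv_psi hκ hσ.ne' hρ]
  positivity

lemma iteratedDeriv_two_psi_pos (hκ : 0 < κ) (hσ : 0 < σ) (hρ : 0 < ρ) (x : ℝ) :
    0 < iteratedDeriv 2 (psi κ μ σ ρ) x := by
  have hΓ := Real.Gamma_pos_of_pos (div_pos hρ hκ)
  have hF := gaussMellin_pos (a := ρ / κ + 1 + 1) (by positivity) (√(2 * κ) / σ * (x - μ))
  rw [iteratedDeriv_two_psi hκ hσ.ne' hρ]
  positivity

end Psi

theorem HasStrictDerivAt.hasStrictDerivAt_of_unique_preimage {𝕜 : Type*}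
    [NontriviallyNormedField 𝕜] [CompleteSpace 𝕜] {G f : 𝕜 → 𝕜} {g y : 𝕜}
    (hG : HasStrictDerivAt G g (f y)) (hg : g ≠ 0) (hy : G (f y) = y)
    (huniq : ∀ᶠ y' in 𝓝 y, ∀ x, G x = y' → x = f y') : HasStrictDerivAt f g⁻¹ y := by
  have hinv := hG.to_localInverse hg
  have hright := hG.eventually_right_inverse hg
  rw [hy] at hinv hright
  refine hinv.congr_of_eventuallyEq ?_
  filter_upwards [hright, huniq] with y' hright' huniq'
  exact huniq' _ hright'

section Threshold

variable {κ μ σ ρ β c : ℝ}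

lemma Rt_eq_sub (x y : ℝ) :
    Rt κ μ ρ β x y = Rt κ μ ρ β x 0 - β * (ρ + 2 * κ) / (ρ * (ρ + κ)) * y := by
  unfold Rt
  ring

lemma Hfun_eq_add (y x : ℝ) :
    Hfun κ μ σ ρ β c y x = Hfun κ μ σ ρ β c 0 x +
      y * (β * (ρ + 2 * κ) / (ρ * (ρ + κ)) * deriv (psi κ μ σ ρ) x) := by
  rw [Hfun, Hfun, Rt_eq_sub x y]
  ring

/-- `Y(x)`: the unique `ȳ` with `H(x, ȳ) = 0`. -/
noncomputable def ybarOf (κ μ σ ρ β c x : ℝ) : ℝ :=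
  -Hfun κ μ σ ρ β c 0 x / (β * (ρ + 2 * κ) / (ρ * (ρ + κ)) * deriv (psi κ μ σ ρ) x)

lemma Hfun_eq_zero_iff {x : ℝ}
    (hB : β * (ρ + 2 * κ) / (ρ * (ρ + κ)) * deriv (psi κ μ σ ρ) x ≠ 0) (y : ℝ) :
    Hfun κ μ σ ρ β c y x = 0 ↔ ybarOf κ μ σ ρ β c x = y := by
  rw [Hfun_eq_add, ybarOf, div_eq_iff hB]
  constructor <;> intro h <;> linarith

lemma hasStrictDerivAt_Hfun (hκ : 0 < κ) (hσ : σ ≠ 0) (hρ : 0 < ρ) (y x : ℝ) :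
    HasStrictDerivAt (Hfun κ μ σ ρ β c y)
      (iteratedDeriv 2 (psi κ μ σ ρ) x * (c - Rt κ μ ρ β x y)) x := by
  have hRt : HasStrictDerivAt (fun z => Rt κ μ ρ β z y) (ρ / (ρ * (ρ + κ))) x := by
    unfold Rt
    refine (HasStrictDerivAt.div_const
      (((hasStrictDerivAt_id x).const_mul ρ).const_add (μ * κ) |>.sub_const _) _).congr_deriv ?_
    simp
  refine ((hasStrictDerivAt_deriv_psi hκ hσ hρ x).mul (hRt.const_sub c) |>.add
    ((hasStrictDerivAt_psi hκ hσ hρ x).const_mul (ρ + κ)⁻¹)).congr_deriv ?_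
  field_simp
  ring

lemma Hfun_ybar_coeff_pos (hκ : 0 < κ) (hσ : 0 < σ) (hρ : 0 < ρ) (hβ : 0 < β) (x : ℝ) :
    0 < β * (ρ + 2 * κ) / (ρ * (ρ + κ)) * deriv (psi κ μ σ ρ) x := by
  have := deriv_psi_pos (μ := μ) hκ hσ hρ x
  positivity

lemma hasStrictDerivAt_ybarOf (hκ : 0 < κ) (hσ : 0 < σ) (hρ : 0 < ρ) (hβ : 0 < β) (x : ℝ) :
    HasStrictDerivAt (ybarOf κ μ σ ρ β c)
      (-(iteratedDeriv 2 (psi κ μ σ ρ) x * (c - Rt κ μ ρ β x (ybarOf κ μ σ ρ β c x))) /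
        (β * (ρ + 2 * κ) / (ρ * (ρ + κ)) * deriv (psi κ μ σ ρ) x)) x := by
  have hψ' := deriv_psi_pos (μ := μ) hκ hσ hρ x
  refine ((hasStrictDerivAt_Hfun hκ hσ.ne' hρ 0 x).neg.div
    ((hasStrictDerivAt_deriv_psi hκ hσ.ne' hρ x).const_mul _)
    (Hfun_ybar_coeff_pos hκ hσ hρ hβ x).ne').congr_deriv ?_
  rw [Rt_eq_sub x (ybarOf κ μ σ ρ β c x), ybarOf, Pi.neg_apply]
  field_simp
  ring

lemma hasDerivAt_of_Hfun_eq_zero (hκ : 0 < κ) (hσ : 0 < σ) (hρ : 0 < ρ) (hβ : 0 < β)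
    {xt : ℝ → ℝ} {y : ℝ} (hzero : Hfun κ μ σ ρ β c y (xt y) = 0)
    (huniq : ∀ᶠ y' in 𝓝 y, ∀ x, Hfun κ μ σ ρ β c y' x = 0 → x = xt y')
    (hneg : c - Rt κ μ ρ β (xt y) y < 0) :
    HasDerivAt xt (-(β * (ρ + 2 * κ) * deriv (psi κ μ σ ρ) (xt y)) /
      (ρ * (ρ + κ) * iteratedDeriv 2 (psi κ μ σ ρ) (xt y) * (c - Rt κ μ ρ β (xt y) y))) y := by
  have hB := Hfun_ybar_coeff_pos (μ := μ) hκ hσ hρ hβ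
  have hsolve (y' x : ℝ) := Hfun_eq_zero_iff (c := c) (hB x).ne' y'
  have hy := (hsolve y (xt y)).1 hzero
  have hG := hasStrictDerivAt_ybarOf (μ := μ) (c := c) hκ hσ hρ hβ (xt y)
  rw [hy] at hG
  have hψ'' := iteratedDeriv_two_psi_pos (μ := μ) hκ hσ hρ (xt y)
  refine (hG.hasStrictDerivAt_of_unique_preimage ?_ hy ?_).hasDerivAt.congr_deriv ?_
  · exact (div_pos (neg_pos.2 (mul_neg_of_pos_of_neg hψ'' hneg)) (hB _)).ne'
  · exact huniq.mono fun y' h x hx => h x ((hsolve y' x).2 hx)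
  · have hR := hneg.ne
    have hψ' := (deriv_psi_pos (μ := μ) hκ hσ hρ (xt y)).ne'
    rw [inv_div]
    field_simp

lemma neg_div_pos_of_sub_Rt_neg (hκ : 0 < κ) (hσ : 0 < σ) (hρ : 0 < ρ) (hβ : 0 < β) {x y : ℝ}
    (hneg : c - Rt κ μ ρ β x y < 0) :
    0 < -(β * (ρ + 2 * κ) * deriv (psi κ μ σ ρ) x) /
      (ρ * (ρ + κ) * iteratedDeriv 2 (psi κ μ σ ρ) x * (c - Rt κ μ ρ β x y)) := by
  have hψ' := deriv_psi_pos (μ := μ) hκ hσ hρ x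
  have hψ'' := iteratedDeriv_two_psi_pos (μ := μ) hκ hσ hρ x
  exact div_pos_of_neg_of_neg (neg_neg_of_pos (by positivity))
    (mul_neg_of_pos_of_neg (by positivity) hneg)

end Threshold

theorem stmt18_general (κ σ ρ μ β c : ℝ) (hκ : 0 < κ) (hσ : 0 < σ) (hρ : 0 < ρ)
    (hβ : 0 < β)
    (xt : ℝ → ℝ)
    (hzero : ∀ ybar > (0 : ℝ), Hfun κ μ σ ρ β c ybar (xt ybar) = 0)
    (huniq : ∀ ybar > (0 : ℝ), ∀ x : ℝ, Hfun κ μ σ ρ β c ybar x = 0 → x = xt ybar)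
    (hneg : ∀ ybar > (0 : ℝ), c - Rt κ μ ρ β (xt ybar) ybar < 0) :
    (∀ ybar > (0 : ℝ),
      HasDerivAt xt
        (-(β * (ρ + 2 * κ) * deriv (psi κ μ σ ρ) (xt ybar)) /
          (ρ * (ρ + κ) * iteratedDeriv 2 (psi κ μ σ ρ) (xt ybar) *
            (c - Rt κ μ ρ β (xt ybar) ybar))) ybar ∧
      0 < -(β * (ρ + 2 * κ) * deriv (psi κ μ σ ρ) (xt ybar)) /
          (ρ * (ρ + κ) * iteratedDeriv 2 (psi κ μ σ ρ) (xt ybar) *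
            (c - Rt κ μ ρ β (xt ybar) ybar))) ∧
      StrictMonoOn xt (Set.Ioi (0 : ℝ)) := by
  have key (y : ℝ) (hy : 0 < y) := And.intro
    (hasDerivAt_of_Hfun_eq_zero hκ hσ hρ hβ (hzero y hy)
      ((eventually_gt_nhds hy).mono fun y' hy' => huniq y' hy') (hneg y hy))
    (neg_div_pos_of_sub_Rt_neg hκ hσ hρ hβ (hneg y hy))
  refine ⟨key, strictMonoOn_of_deriv_pos (convex_Ioi 0)
    (fun y hy => (key y hy).1.continuousAt.continuousWithinAt) fun y hy => ?_⟩
  rw [interior_Ioi] at hy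
  rw [(key y hy).1.deriv]
  exact (key y hy).2

/-- If `x̃(ybar)` is the unique zero of `H(·, ybar)` and `c − R̃(x̃(ybar), ybar) < 0`, then
`x̃` is differentiable and strictly increasing in `ybar`, with
`x̃'(ybar) = −β(ρ+2κ)ψ'(x̃)/(ρ(ρ+κ)ψ''(x̃)(c−R̃(x̃, ybar))) > 0`. -/
theorem stmt18 (κ σ ρ μ β c : ℝ) (hκ : 0 < κ) (hσ : 0 < σ) (hρ : 0 < ρ)
    (hβ : 0 < β) (hc : 0 ≤ c)
    (xt : ℝ → ℝ)
    (hzero : ∀ ybar > (0 : ℝ), Hfun κ μ σ ρ β c ybar (xt ybar) = 0)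
    (huniq : ∀ ybar > (0 : ℝ), ∀ x : ℝ, Hfun κ μ σ ρ β c ybar x = 0 → x = xt ybar)
    (hneg : ∀ ybar > (0 : ℝ), c - Rt κ μ ρ β (xt ybar) ybar < 0) :
    (∀ ybar > (0 : ℝ),
      HasDerivAt xt
        (-(β * (ρ + 2 * κ) * deriv (psi κ μ σ ρ) (xt ybar)) /
          (ρ * (ρ + κ) * iteratedDeriv 2 (psi κ μ σ ρ) (xt ybar) *
            (c - Rt κ μ ρ β (xt ybar) ybar))) ybar ∧
      0 < -(β * (ρ + 2 * κ) * deriv (psi κ μ σ ρ) (xt ybar)) /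
          (ρ * (ρ + κ) * iteratedDeriv 2 (psi κ μ σ ρ) (xt ybar) *
            (c - Rt κ μ ρ β (xt ybar) ybar))) ∧
      StrictMonoOn xt (Set.Ioi (0 : ℝ)) :=
  stmt18_general κ σ ρ μ β c hκ hσ hρ hβ xt hzero huniq hneg
end
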